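/- arXiv:2412.19462 — 11 statements merged into one kernel-verified Lean document; each statement's English description precedes it below -/
import Mathlib

section
/- Let x ∈ ℝⁿ, r̄ ∈ ℝⁿ, κ ≥ 0 and ε ≥ 0. Then the maximum of the function r ↦ κ xᵀΣx − rᵀx over the ellipsoid {r ∈ ℝⁿ : (r − r̄)ᵀΣ⁻¹(r − r̄) ≤ ε} is attained and equals κ xᵀΣx − r̄ᵀx + √ε · √(xᵀΣx). (This reduces the robust mean–variance model with ellipsoidal uncertainty set and Ω = Σ to a deterministic objective.) -/
/-!
Writing `r = r̄ - s`, the objective is `κ xᵀΣx - r̄ᵀx + sᵀx` with `s` ranging over the centred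
ellipsoid `sᵀΣ⁻¹s ≤ ε`, so everything reduces to the support function of that ellipsoid.
Cauchy–Schwarz for the inner product `⟪u, v⟫ = uᵀΣ⁻¹v`, applied to `s` and `Σx`, gives
`(sᵀx)² ≤ (sᵀΣ⁻¹s)(xᵀΣx) ≤ ε xᵀΣx`, and the bound is attained at `s = (√ε / √(xᵀΣx)) Σx`.
-/

open Matrix

namespace Matrix

variable {ι : Type*} [Fintype ι]

theorem PosSemidef.dotProduct_mulVec_sq_le {B : Matrix ι ι ℝ} (hB : B.PosSemidef)
    (u v : ι → ℝ) : (u ⬝ᵥ B *ᵥ v) ^ 2 ≤ (u ⬝ᵥ B *ᵥ u) * (v ⬝ᵥ B *ᵥ v) := by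
  let := B.toSeminormedAddCommGroup hB
  let := B.toInnerProductSpace hB
  -- in this inner product space `⟪u, v⟫_ℝ` unfolds to `(B *ᵥ v) ⬝ᵥ u`
  have h : (B *ᵥ v) ⬝ᵥ u * ((B *ᵥ v) ⬝ᵥ u) ≤ (B *ᵥ u) ⬝ᵥ u * ((B *ᵥ v) ⬝ᵥ v) :=
    real_inner_mul_inner_self_le u v
  rw [dotProduct_comm (B *ᵥ v) u, dotProduct_comm (B *ᵥ u) u, dotProduct_comm (B *ᵥ v) v] at h
  rwa [sq]

variable [DecidableEq ι] {A : Matrix ι ι ℝ}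

theorem PosDef.inv_mulVec_mulVec (hA : A.PosDef) (x : ι → ℝ) : A⁻¹ *ᵥ (A *ᵥ x) = x := by
  rw [mulVec_mulVec, nonsing_inv_mul A hA.det_pos.ne'.isUnit, one_mulVec]

theorem PosDef.mulVec_dotProduct_inv_mulVec_mulVec (hA : A.PosDef) (x : ι → ℝ) :
    A *ᵥ x ⬝ᵥ A⁻¹ *ᵥ (A *ᵥ x) = x ⬝ᵥ A *ᵥ x := by
  rw [hA.inv_mulVec_mulVec, dotProduct_comm]

theorem PosDef.dotProduct_le_sqrt_mul_sqrt (hA : A.PosDef) {s : ι → ℝ} {ε : ℝ}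
    (hs : s ⬝ᵥ A⁻¹ *ᵥ s ≤ ε) (x : ι → ℝ) :
    s ⬝ᵥ x ≤ √ε * √(x ⬝ᵥ A *ᵥ x) := by
  have hq : 0 ≤ x ⬝ᵥ A *ᵥ x := hA.posSemidef.dotProduct_mulVec_nonneg x
  have hsq : (s ⬝ᵥ x) ^ 2 ≤ ε * (x ⬝ᵥ A *ᵥ x) := calc
    (s ⬝ᵥ x) ^ 2 = (s ⬝ᵥ A⁻¹ *ᵥ (A *ᵥ x)) ^ 2 := by rw [hA.inv_mulVec_mulVec]
    _ ≤ (s ⬝ᵥ A⁻¹ *ᵥ s) * (x ⬝ᵥ A *ᵥ x) := by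
      simpa only [hA.mulVec_dotProduct_inv_mulVec_mulVec] using
        hA.inv.posSemidef.dotProduct_mulVec_sq_le s (A *ᵥ x)
    _ ≤ ε * (x ⬝ᵥ A *ᵥ x) := by gcongr
  exact (Real.le_sqrt_of_sq_le hsq).trans_eq (Real.sqrt_mul' ε hq)

theorem PosDef.isGreatest_dotProduct_ellipsoid (hA : A.PosDef) {ε : ℝ} (hε : 0 ≤ ε)
    (x : ι → ℝ) :
    IsGreatest {w | ∃ s : ι → ℝ, s ⬝ᵥ A⁻¹ *ᵥ s ≤ ε ∧ w = s ⬝ᵥ x}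
      (√ε * √(x ⬝ᵥ A *ᵥ x)) := by
  refine ⟨?_, fun w ⟨s, hs, hw⟩ ↦ hw ▸ hA.dotProduct_le_sqrt_mul_sqrt hs x⟩
  set q := x ⬝ᵥ A *ᵥ x
  have hq : 0 ≤ q := hA.posSemidef.dotProduct_mulVec_nonneg x
  -- if `q = 0` then `t = 0` by the convention `a / 0 = 0`, and `s = 0` is a maximizer
  set t := √ε / √q
  have hAx : A *ᵥ x ⬝ᵥ x = q := dotProduct_comm _ _
  refine ⟨t • (A *ᵥ x), ?_, ?_⟩
  · have ht : t ^ 2 * q = ε / q * q := by rw [div_pow, Real.sq_sqrt hε, Real.sq_sqrt hq]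
    rw [mulVec_smul, hA.inv_mulVec_mulVec, smul_dotProduct, dotProduct_smul, hAx,
      smul_eq_mul, smul_eq_mul, ← mul_assoc, ← sq, ht]
    rcases hq.eq_or_lt with hq0 | hq0
    · simpa [← hq0] using hε
    · rw [div_mul_cancel₀ ε hq0.ne']
  · rw [smul_dotProduct, hAx, smul_eq_mul, div_mul_eq_mul_div, mul_div_assoc, Real.div_sqrt]

end Matrix

theorem stmt0_general (n : ℕ) (A : Matrix (Fin n) (Fin n) ℝ)
    (hA : A.PosDef)
    (x rbar : Fin n → ℝ) (κ ε : ℝ) (hε : 0 ≤ ε) :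
    IsGreatest {v : ℝ | ∃ r : Fin n → ℝ,
        (r - rbar) ⬝ᵥ (A⁻¹ *ᵥ (r - rbar)) ≤ ε ∧ v = κ * (x ⬝ᵥ A *ᵥ x) - r ⬝ᵥ x}
      (κ * (x ⬝ᵥ A *ᵥ x) - rbar ⬝ᵥ x + Real.sqrt ε * Real.sqrt (x ⬝ᵥ A *ᵥ x)) := by
  have quad_neg (s : Fin n → ℝ) : -s ⬝ᵥ A⁻¹ *ᵥ -s = s ⬝ᵥ A⁻¹ *ᵥ s := by
    rw [mulVec_neg, neg_dotProduct, dotProduct_neg, neg_neg]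
  obtain ⟨⟨s, hs, hsx⟩, hbound⟩ := hA.isGreatest_dotProduct_ellipsoid hε x
  refine ⟨⟨rbar - s, ?_, ?_⟩, ?_⟩
  · rwa [sub_sub_cancel_left, quad_neg]
  · rw [hsx, sub_dotProduct]
    ring
  · rintro v ⟨r, hr, rfl⟩
    have hrx := hbound ⟨rbar - r, by rwa [← neg_sub, quad_neg], rfl⟩
    rw [sub_dotProduct] at hrx
    linarith

/-- For a symmetric positive definite `A` (playing the role of Σ),
the maximum of `r ↦ κ xᵀAx − rᵀx` over the ellipsoid
`{r : (r − r̄)ᵀA⁻¹(r − r̄) ≤ ε}` is attained and equals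
`κ xᵀAx − r̄ᵀx + √ε √(xᵀAx)`. -/
theorem stmt0 (n : ℕ) (hn : 1 ≤ n) (A : Matrix (Fin n) (Fin n) ℝ)
    (hA : A.PosDef) (hAs : A.IsSymm)
    (x rbar : Fin n → ℝ) (κ ε : ℝ) (hκ : 0 ≤ κ) (hε : 0 ≤ ε) :
    IsGreatest {v : ℝ | ∃ r : Fin n → ℝ,
        (r - rbar) ⬝ᵥ (A⁻¹ *ᵥ (r - rbar)) ≤ ε ∧ v = κ * (x ⬝ᵥ A *ᵥ x) - r ⬝ᵥ x}
      (κ * (x ⬝ᵥ A *ᵥ x) - rbar ⬝ᵥ x + Real.sqrt ε * Real.sqrt (x ⬝ᵥ A *ᵥ x)) :=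
  stmt0_general n A hA x rbar κ ε hε
end

section
/- Let κ > 0 and r̄ ∈ ℝⁿ. The vector x_MV = (1/(2κ))(Σ⁻¹ − Σ⁻¹e eᵀΣ⁻¹/β) r̄ + x_MIN is the unique minimizer of the function x ↦ κ xᵀΣx − r̄ᵀx over C, and the minimum value equals (2κ − eᵀΣ⁻¹r̄)²/(4κ β) − (r̄ᵀΣ⁻¹r̄)/(4κ). -/
/-!
The objective `f x = κ xᵀΣx − r̄ᵀx` is a strictly convex quadratic. If `x ∈ C` satisfies the
Lagrange condition `2κΣx = r̄ + μe`, then `f (x + d) = f x + κ dᵀΣd` whenever `eᵀd = 0`, so `x` is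
the unique minimiser of `f` on `C`, and `κ xᵀΣx = (r̄ᵀx + μ)/2` gives its value. The point `x_MV`
is `(2κ)⁻¹ Σ⁻¹ (r̄ + μe)` with `μ = (2κ − eᵀΣ⁻¹r̄)/β`, the multiplier that puts it on `C`.
-/

open Matrix

variable {ι : Type*} [Fintype ι]

theorem Matrix.IsSymm.dotProduct_mulVec_comm {α : Type*} [CommSemiring α] {A : Matrix ι ι α}
    (hA : A.IsSymm) (x y : ι → α) : x ⬝ᵥ A *ᵥ y = y ⬝ᵥ A *ᵥ x := by
  simpa only [hA.eq] using dotProduct_transpose_mulVec A x y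

section QuadraticObjective

def quadraticObjective (A : Matrix ι ι ℝ) (κ : ℝ) (r x : ι → ℝ) : ℝ :=
  κ * (x ⬝ᵥ A *ᵥ x) - r ⬝ᵥ x

variable {A : Matrix ι ι ℝ} {κ μ : ℝ} {r e x : ι → ℝ}

theorem quadraticObjective_add (hA : A.IsSymm) (κ : ℝ) (r x d : ι → ℝ) :
    quadraticObjective A κ r (x + d) =
      quadraticObjective A κ r x + d ⬝ᵥ ((2 * κ) • (A *ᵥ x) - r) + κ * (d ⬝ᵥ A *ᵥ d) := by
  simp only [quadraticObjective, mulVec_add, dotProduct_add, add_dotProduct, dotProduct_sub,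
    dotProduct_smul, smul_eq_mul, hA.dotProduct_mulVec_comm x d, dotProduct_comm r d]
  ring

theorem quadraticObjective_lt_of_lagrange (hA : A.PosDef) (hκ : 0 < κ)
    (hx : (2 * κ) • (A *ᵥ x) = r + μ • e) {y : ι → ℝ} (hy : e ⬝ᵥ y = e ⬝ᵥ x) (hne : y ≠ x) :
    quadraticObjective A κ r x < quadraticObjective A κ r y := by
  obtain ⟨d, rfl⟩ : ∃ d, y = x + d := ⟨y - x, by abel⟩
  have hd : d ≠ 0 := fun h => hne (by simp [h])
  have hed : d ⬝ᵥ e = 0 := by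
    rwa [dotProduct_add, add_eq_left, dotProduct_comm] at hy
  have hdAd : 0 < d ⬝ᵥ A *ᵥ d := by simpa using hA.dotProduct_mulVec_pos hd
  rw [quadraticObjective_add (isHermitian_iff_isSymm.mp hA.isHermitian), hx, add_sub_cancel_left,
    dotProduct_smul, hed, smul_zero, add_zero]
  exact lt_add_of_pos_right _ (mul_pos hκ hdAd)

theorem quadraticObjective_eq_of_lagrange (hx : (2 * κ) • (A *ᵥ x) = r + μ • e)
    (hex : e ⬝ᵥ x = 1) :
    quadraticObjective A κ r x = (μ - r ⬝ᵥ x) / 2 := by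
  unfold quadraticObjective
  have h := congrArg (dotProduct x) hx
  rw [dotProduct_smul, dotProduct_add, dotProduct_smul, dotProduct_comm x r, dotProduct_comm x e,
    hex, smul_eq_mul, smul_eq_mul] at h
  linarith

end QuadraticObjective

theorem smul_sub_vecMulVec_mulVec_add_smul (B : Matrix ι ι ℝ) {κ : ℝ}
    (hκ : κ ≠ 0) (β : ℝ) (r e : ι → ℝ) :
    (1 / (2 * κ)) • ((B - β⁻¹ • vecMulVec (B *ᵥ e) (e ᵥ* B)) *ᵥ r) + β⁻¹ • (B *ᵥ e) =
      (2 * κ)⁻¹ • (B *ᵥ (r + ((2 * κ - e ⬝ᵥ B *ᵥ r) / β) • e)) := by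
  rw [sub_mulVec, smul_mulVec, vecMulVec_mulVec, op_smul_eq_smul, ← dotProduct_mulVec,
    mulVec_add, mulVec_smul]
  simp only [smul_add, smul_sub, smul_smul]
  have hcoeff : (2 * κ)⁻¹ * ((2 * κ - e ⬝ᵥ B *ᵥ r) / β) =
      β⁻¹ - 1 / (2 * κ) * (β⁻¹ * e ⬝ᵥ B *ᵥ r) := by
    field_simp
  rw [hcoeff]
  module

theorem stmt2_general (n : ℕ) (hn : 1 ≤ n) (A : Matrix (Fin n) (Fin n) ℝ)
    (hA : A.PosDef)
    (e : Fin n → ℝ) (he : e = fun _ => 1)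
    (β : ℝ) (hβ : β = e ⬝ᵥ A⁻¹ *ᵥ e)
    (xMIN : Fin n → ℝ) (hxMIN : xMIN = β⁻¹ • (A⁻¹ *ᵥ e))
    (κ : ℝ) (hκ : 0 < κ) (rbar : Fin n → ℝ)
    (xMV : Fin n → ℝ)
    (hxMV : xMV = (1 / (2 * κ)) •
        ((A⁻¹ - β⁻¹ • vecMulVec (A⁻¹ *ᵥ e) (e ᵥ* A⁻¹)) *ᵥ rbar) + xMIN) :
    e ⬝ᵥ xMV = 1 ∧
    (∀ y : Fin n → ℝ, e ⬝ᵥ y = 1 → y ≠ xMV →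
      κ * (xMV ⬝ᵥ A *ᵥ xMV) - rbar ⬝ᵥ xMV < κ * (y ⬝ᵥ A *ᵥ y) - rbar ⬝ᵥ y) ∧
    κ * (xMV ⬝ᵥ A *ᵥ xMV) - rbar ⬝ᵥ xMV =
      (2 * κ - e ⬝ᵥ A⁻¹ *ᵥ rbar) ^ 2 / (4 * κ * β) - (rbar ⬝ᵥ A⁻¹ *ᵥ rbar) / (4 * κ) := by
  have he0 : e ≠ 0 := fun h => one_ne_zero (congrFun (he.symm.trans h) ⟨0, hn⟩)
  have hβ0 : β ≠ 0 := (hβ ▸ by simpa using hA.inv.dotProduct_mulVec_pos he0 : 0 < β).ne'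
  have hκ0 : 2 * κ ≠ 0 := by positivity
  set c := e ⬝ᵥ A⁻¹ *ᵥ rbar
  set μ := (2 * κ - c) / β
  have hμ : μ * β = 2 * κ - c := div_mul_cancel₀ _ hβ0
  have hx : xMV = (2 * κ)⁻¹ • (A⁻¹ *ᵥ (rbar + μ • e)) := by
    rw [hxMV, hxMIN, smul_sub_vecMulVec_mulVec_add_smul _ hκ.ne']
  have hlagrange : (2 * κ) • (A *ᵥ xMV) = rbar + μ • e := by
    rw [hx, mulVec_smul, mulVec_mulVec, mul_nonsing_inv _ hA.det_pos.ne'.isUnit, one_mulVec,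
      smul_smul, mul_inv_cancel₀ hκ0, one_smul]
  have hC : e ⬝ᵥ xMV = 1 := by
    rw [hx, dotProduct_smul, mulVec_add, mulVec_smul, dotProduct_add, dotProduct_smul, ← hβ,
      smul_eq_mul, smul_eq_mul]
    field_simp
    linear_combination hμ
  have hrc : rbar ⬝ᵥ A⁻¹ *ᵥ e = c :=
    (isHermitian_iff_isSymm.mp hA.inv.isHermitian).dotProduct_mulVec_comm _ _
  refine ⟨hC, fun y hy hne => quadraticObjective_lt_of_lagrange hA hκ hlagrange
    (hy.trans hC.symm) hne, ?_⟩
  change quadraticObjective A κ rbar xMV = _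
  rw [quadraticObjective_eq_of_lagrange hlagrange hC, hx, dotProduct_smul, mulVec_add,
    mulVec_smul, dotProduct_add, dotProduct_smul, hrc, smul_eq_mul, smul_eq_mul]
  field_simp
  linear_combination (8 * κ - 4 * c) * hμ

/-- for `κ > 0`,
`x_MV = (1/(2κ))(Σ⁻¹ − Σ⁻¹e eᵀΣ⁻¹/β) r̄ + x_MIN` is the unique minimizer of
`x ↦ κ xᵀΣx − r̄ᵀx` over `C = {x : eᵀx = 1}`, with minimum value
`(2κ − eᵀΣ⁻¹r̄)²/(4κβ) − r̄ᵀΣ⁻¹r̄/(4κ)`. -/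
theorem stmt2 (n : ℕ) (hn : 1 ≤ n) (A : Matrix (Fin n) (Fin n) ℝ)
    (hA : A.PosDef) (hAs : A.IsSymm)
    (e : Fin n → ℝ) (he : e = fun _ => 1)
    (β : ℝ) (hβ : β = e ⬝ᵥ A⁻¹ *ᵥ e)
    (xMIN : Fin n → ℝ) (hxMIN : xMIN = β⁻¹ • (A⁻¹ *ᵥ e))
    (κ : ℝ) (hκ : 0 < κ) (rbar : Fin n → ℝ)
    (xMV : Fin n → ℝ)
    (hxMV : xMV = (1 / (2 * κ)) •
        ((A⁻¹ - β⁻¹ • vecMulVec (A⁻¹ *ᵥ e) (e ᵥ* A⁻¹)) *ᵥ rbar) + xMIN) :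
    e ⬝ᵥ xMV = 1 ∧
    (∀ y : Fin n → ℝ, e ⬝ᵥ y = 1 → y ≠ xMV →
      κ * (xMV ⬝ᵥ A *ᵥ xMV) - rbar ⬝ᵥ xMV < κ * (y ⬝ᵥ A *ᵥ y) - rbar ⬝ᵥ y) ∧
    κ * (xMV ⬝ᵥ A *ᵥ xMV) - rbar ⬝ᵥ xMV =
      (2 * κ - e ⬝ᵥ A⁻¹ *ᵥ rbar) ^ 2 / (4 * κ * β) - (rbar ⬝ᵥ A⁻¹ *ᵥ rbar) / (4 * κ) :=
  stmt2_general n hn A hA e he β hβ xMIN hxMIN κ hκ rbar xMV hxMV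
end

section
/- Let κ > 0 and r̄ ∈ ℝⁿ. For each ε > 0, the function x ↦ κ xᵀΣx + √ε·√(xᵀΣx) − r̄ᵀx has a unique minimizer x_RMV(ε) over C. There exists a strictly decreasing function ρ* : (0, ∞) → (0, ∞) such that for every ε > 0, x_RMV(ε) = (κρ*(ε)/(1 + κρ*(ε))) · x_MV + (1/(1 + κρ*(ε))) · x_MIN, i.e., the robust mean–variance portfolio is a convex combination of the mean–variance portfolio and the minimum-variance portfolio. -/
/-!
Write `q x = xᵀΣx`. On the plane `eᵀx = 1` the objective is strictly convex, and a point `x`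
with `(2κ + √ε / √(q x)) Σx ∈ r̄ + ℝe` is its strict minimizer: along a direction `z` with
`eᵀz = 0` the gain in `√q` is controlled by Cauchy–Schwarz for `Σ`. Every point
`x_MIN + t (x_MV − x_MIN)` has `Σx ∈ (t / 2κ) r̄ + ℝe`, so with `ρ = 2 √(q x) / √ε` the
condition reads `t = κρ / (1 + κρ)`, and `q x = 1/β + t² q (x_MV − x_MIN)` turns the requirement
`√(q x) = √ε ρ / 2` into a scalar equation in `ρ`, solved by the intermediate value theorem.
Comparing the minimizers for `ε₁ < ε₂` in each other's objectives shows that the risk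
`√ε ρ(ε) / 2` decreases in `ε`, hence so does `ρ`.
-/

open Matrix

namespace Matrix

variable {ι : Type*} [Fintype ι] {A : Matrix ι ι ℝ}

lemma IsSymm.dotProduct_mulVec_comm_s4 (hA : A.IsSymm) (u v : ι → ℝ) :
    u ⬝ᵥ A *ᵥ v = v ⬝ᵥ A *ᵥ u := by
  rw [dotProduct_mulVec, ← mulVec_transpose, hA.eq, dotProduct_comm]

lemma IsSymm.dotProduct_mulVec_add_self (hA : A.IsSymm) (x z : ι → ℝ) :
    (x + z) ⬝ᵥ A *ᵥ (x + z) = x ⬝ᵥ A *ᵥ x + 2 * (z ⬝ᵥ A *ᵥ x) + z ⬝ᵥ A *ᵥ z := by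
  rw [mulVec_add, add_dotProduct, dotProduct_add, dotProduct_add,
    hA.dotProduct_mulVec_comm_s4 x z]
  ring

lemma PosSemidef.dotProduct_mulVec_self_nonneg (hA : A.PosSemidef) (x : ι → ℝ) :
    0 ≤ x ⬝ᵥ A *ᵥ x := by
  simpa using hA.dotProduct_mulVec_nonneg x

lemma PosSemidef.dotProduct_mulVec_le_sqrt_mul_sqrt (hA : A.PosSemidef) (x y : ι → ℝ) :
    x ⬝ᵥ A *ᵥ y ≤ √(x ⬝ᵥ A *ᵥ x) * √(y ⬝ᵥ A *ᵥ y) := by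
  classical
  have hcs := (toBilin' A).apply_mul_apply_le_of_forall_zero_le
    (fun v => by simpa only [toBilin'_apply'] using hA.dotProduct_mulVec_self_nonneg v) x y
  simp only [toBilin'_apply', (isHermitian_iff_isSymm.mp hA.isHermitian).dotProduct_mulVec_comm_s4 y x,
    ← sq] at hcs
  rw [← Real.sqrt_mul (hA.dotProduct_mulVec_self_nonneg x)]
  exact Real.le_sqrt_of_sq_le hcs

variable [DecidableEq ι] {e : ι → ℝ}

lemma dotProduct_sub_smul_vecMulVec_mulVec (hβ : e ⬝ᵥ A⁻¹ *ᵥ e ≠ 0) (r : ι → ℝ) :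
    e ⬝ᵥ ((A⁻¹ - (e ⬝ᵥ A⁻¹ *ᵥ e)⁻¹ • vecMulVec (A⁻¹ *ᵥ e) (e ᵥ* A⁻¹)) *ᵥ r) = 0 := by
  rw [sub_mulVec, smul_mulVec, vecMulVec_mulVec, op_smul_eq_smul, dotProduct_sub,
    dotProduct_smul, dotProduct_smul, smul_eq_mul, smul_eq_mul, mul_comm _ (e ⬝ᵥ _),
    inv_mul_cancel_left₀ hβ, dotProduct_mulVec, sub_self]

lemma mulVec_sub_smul_vecMulVec_mulVec (hA : IsUnit A.det) (b : ℝ) (r : ι → ℝ) :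
    A *ᵥ ((A⁻¹ - b • vecMulVec (A⁻¹ *ᵥ e) (e ᵥ* A⁻¹)) *ᵥ r) = r - (b * (e ᵥ* A⁻¹ ⬝ᵥ r)) • e := by
  simp only [sub_mulVec, smul_mulVec, vecMulVec_mulVec, op_smul_eq_smul, mulVec_sub,
    mulVec_smul, mulVec_mulVec, mul_nonsing_inv A hA, one_mulVec, smul_smul]

end Matrix

variable {ι : Type*} [Fintype ι] {A : Matrix ι ι ℝ}

/-- The paper's objective for the parameter `ε` is `robustObjective Σ r̄ κ √ε`. -/
noncomputable def robustObjective (A : Matrix ι ι ℝ) (r : ι → ℝ) (κ a : ℝ) (x : ι → ℝ) : ℝ :=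
  κ * (x ⬝ᵥ A *ᵥ x) + a * √(x ⬝ᵥ A *ᵥ x) - r ⬝ᵥ x

theorem robustObjective_lt_of_smul_mulVec_eq {r c x y : ι → ℝ} {κ a μ : ℝ} (hA : A.PosDef)
    (hκ : 0 < κ) (ha : 0 ≤ a) (hx : x ≠ 0)
    (hgrad : (2 * κ + a / √(x ⬝ᵥ A *ᵥ x)) • (A *ᵥ x) = r + μ • c)
    (hcy : c ⬝ᵥ y = c ⬝ᵥ x) (hyx : y ≠ x) :
    robustObjective A r κ a x < robustObjective A r κ a y := by
  obtain ⟨z, rfl⟩ : ∃ z, y = x + z := ⟨y - x, by abel⟩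
  have hz : z ≠ 0 := by rintro rfl; simp at hyx
  have hcz : c ⬝ᵥ z = 0 := by simpa [dotProduct_add] using hcy
  have hAs : A.IsSymm := isHermitian_iff_isSymm.mp hA.isHermitian
  set s := √(x ⬝ᵥ A *ᵥ x) with hs_def
  have hs : 0 < s := Real.sqrt_pos.2 (hA.dotProduct_mulVec_pos hx)
  have hs2 : s ^ 2 = x ⬝ᵥ A *ᵥ x := Real.sq_sqrt (hA.posSemidef.dotProduct_mulVec_self_nonneg x)
  set p := z ⬝ᵥ A *ᵥ x
  have hrz : r ⬝ᵥ z = (2 * κ + a / s) * p := by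
    have := congrArg (z ⬝ᵥ ·) hgrad
    simp only [dotProduct_smul, dotProduct_add, dotProduct_comm z c, hcz, smul_eq_mul,
      mul_zero, add_zero] at this
    rw [dotProduct_comm, ← this]
  have hcs : s ^ 2 + p ≤ s * √((x + z) ⬝ᵥ A *ᵥ (x + z)) := by
    calc s ^ 2 + p = x ⬝ᵥ A *ᵥ (x + z) := by
          rw [mulVec_add, dotProduct_add, hAs.dotProduct_mulVec_comm_s4 x z, hs2]
      _ ≤ s * √((x + z) ⬝ᵥ A *ᵥ (x + z)) :=
          hA.posSemidef.dotProduct_mulVec_le_sqrt_mul_sqrt x (x + z)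
  have hqz : 0 < z ⬝ᵥ A *ᵥ z := hA.dotProduct_mulVec_pos hz
  have hgap : robustObjective A r κ a (x + z) - robustObjective A r κ a x
      = κ * (z ⬝ᵥ A *ᵥ z) + a / s * (s * √((x + z) ⬝ᵥ A *ᵥ (x + z)) - s ^ 2 - p) := by
    rw [robustObjective, robustObjective, hAs.dotProduct_mulVec_add_self, dotProduct_add, hrz,
      ← hs_def, ← hs2]
    field_simp
    ring
  have : 0 ≤ a / s * (s * √((x + z) ⬝ᵥ A *ᵥ (x + z)) - s ^ 2 - p) :=
    mul_nonneg (div_nonneg ha hs.le) (by linarith)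
  linarith [mul_pos hκ hqz]

theorem exists_pos_mul_sq_div_four_eq {ε κ m γ : ℝ} (hε : 0 < ε) (hκ : 0 < κ) (hm : 0 < m)
    (hγ : 0 ≤ γ) : ∃ ρ, 0 < ρ ∧ ε * ρ ^ 2 / 4 = m + (κ * ρ / (1 + κ * ρ)) ^ 2 * γ := by
  set g : ℝ → ℝ := fun ρ => ε * ρ ^ 2 / 4 - (κ * ρ / (1 + κ * ρ)) ^ 2 * γ
  set R := 2 * √((m + γ) / ε)
  have hR : 0 ≤ R := by positivity
  have hgR : m ≤ g R := by
    have hR2 : ε * R ^ 2 / 4 = m + γ := by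
      rw [mul_pow, Real.sq_sqrt (by positivity)]
      field_simp
      ring
    have ht : (κ * R / (1 + κ * R)) ^ 2 ≤ 1 :=
      pow_le_one₀ (by positivity) ((div_le_one (by positivity)).2 (by linarith))
    simp only [g, hR2]
    nlinarith
  have hcont : ContinuousOn g (Set.Icc 0 R) := by
    refine ContinuousOn.sub (by fun_prop) (ContinuousOn.mul
      (ContinuousOn.pow (ContinuousOn.div (by fun_prop) (by fun_prop) fun ρ hρ => ?_) _)
      continuousOn_const)
    have := mul_nonneg hκ.le hρ.1
    positivity
  obtain ⟨ρ, hρR, hgρ⟩ := intermediate_value_Icc hR hcont ⟨by simp [g, hm.le], hgR⟩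
  refine ⟨ρ, hρR.1.lt_of_ne ?_, by simp only [g] at hgρ; linarith⟩
  rintro rfl
  simp [g] at hgρ
  linarith

theorem dotProduct_mulVec_add_smul_of_mulVec_eq_smul {e x₀ d : ι → ℝ} {m : ℝ} (hA : A.IsSymm)
    (hex₀ : e ⬝ᵥ x₀ = 1) (hAx₀ : A *ᵥ x₀ = m • e) (hed : e ⬝ᵥ d = 0) (t : ℝ) :
    (x₀ + t • d) ⬝ᵥ A *ᵥ (x₀ + t • d) = m + t ^ 2 * (d ⬝ᵥ A *ᵥ d) := by
  rw [hA.dotProduct_mulVec_add_self, hAx₀, smul_dotProduct, dotProduct_smul, dotProduct_smul,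
    dotProduct_comm d, hed, dotProduct_comm, hex₀, mulVec_smul, smul_dotProduct, dotProduct_smul]
  simp only [smul_eq_mul]
  ring

theorem robustObjective_lt_of_sqrt_eq {r e x₀ d y : ι → ℝ} {κ ε ρ m c : ℝ} (hA : A.PosDef)
    (hκ : 0 < κ) (hε : 0 < ε) (hρ : 0 < ρ)
    (hex₀ : e ⬝ᵥ x₀ = 1) (hAx₀ : A *ᵥ x₀ = m • e)
    (hed : e ⬝ᵥ d = 0) (hAd : A *ᵥ d = (1 / (2 * κ)) • r + c • e)
    (hsqrt : √((x₀ + (κ * ρ / (1 + κ * ρ)) • d) ⬝ᵥ A *ᵥ (x₀ + (κ * ρ / (1 + κ * ρ)) • d))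
      = √ε * ρ / 2)
    (hey : e ⬝ᵥ y = 1) (hy : y ≠ x₀ + (κ * ρ / (1 + κ * ρ)) • d) :
    robustObjective A r κ √ε (x₀ + (κ * ρ / (1 + κ * ρ)) • d) < robustObjective A r κ √ε y := by
  set t := κ * ρ / (1 + κ * ρ)
  have hex : e ⬝ᵥ (x₀ + t • d) = 1 := by
    rw [dotProduct_add, dotProduct_smul, hed, hex₀, smul_zero, add_zero]
  have hAx : A *ᵥ (x₀ + t • d) = (t / (2 * κ)) • r + (m + t * c) • e := by
    rw [mulVec_add, mulVec_smul, hAx₀, hAd]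
    module
  have hcoef : (2 * κ + √ε / (√ε * ρ / 2)) * (t / (2 * κ)) = 1 := by
    have : 0 < √ε := Real.sqrt_pos.2 hε
    have : 0 < 1 + κ * ρ := by positivity
    simp only [t]
    field_simp
    ring
  refine robustObjective_lt_of_smul_mulVec_eq hA hκ (Real.sqrt_nonneg ε)
    (fun h => by simp [h] at hex) (μ := (2 * κ + √ε / (√ε * ρ / 2)) * (m + t * c)) ?_
    (hey.trans hex.symm) hy
  rw [hsqrt, hAx, smul_add, smul_smul, smul_smul, hcoef, one_smul]

theorem strictAntiOn_of_robustObjective_le {r : ι → ℝ} {κ : ℝ} {x : ℝ → ι → ℝ} {ρ : ℝ → ℝ}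
    (hρ : ∀ ε > 0, 0 < ρ ε) (hsqrt : ∀ ε > 0, √(x ε ⬝ᵥ A *ᵥ x ε) = √ε * ρ ε / 2)
    (hmin : ∀ ε > 0, ∀ ε' > 0,
      robustObjective A r κ √ε (x ε) ≤ robustObjective A r κ √ε (x ε')) :
    StrictAntiOn ρ (Set.Ioi 0) := by
  intro ε₁ hε₁ ε₂ hε₂ hε
  have h₁₂ := hmin ε₁ hε₁ ε₂ hε₂
  have h₂₁ := hmin ε₂ hε₂ ε₁ hε₁
  simp only [robustObjective, hsqrt ε₁ hε₁, hsqrt ε₂ hε₂] at h₁₂ h₂₁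
  have hsq : √ε₁ < √ε₂ := Real.sqrt_lt_sqrt (le_of_lt hε₁) hε
  have hexchange : (√ε₂ - √ε₁) * (√ε₂ * ρ ε₂ - √ε₁ * ρ ε₁) ≤ 0 := by linarith
  have hrisk : √ε₂ * ρ ε₂ ≤ √ε₁ * ρ ε₁ := by nlinarith
  by_contra! hρ₁₂
  have := mul_le_mul_of_nonneg_left hρ₁₂ (Real.sqrt_nonneg ε₂)
  have := mul_lt_mul_of_pos_right hsq (hρ ε₁ hε₁)
  linarith

theorem exists_strictAntiOn_robustObjective_minimizer {r e x₀ d : ι → ℝ} {κ m c : ℝ}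
    (hA : A.PosDef) (hκ : 0 < κ) (hex₀ : e ⬝ᵥ x₀ = 1) (hAx₀ : A *ᵥ x₀ = m • e)
    (hed : e ⬝ᵥ d = 0) (hAd : A *ᵥ d = (1 / (2 * κ)) • r + c • e) :
    ∃ ρ : ℝ → ℝ, (∀ ε, 0 < ε → 0 < ρ ε) ∧ StrictAntiOn ρ (Set.Ioi 0) ∧
      ∀ ε, 0 < ε → e ⬝ᵥ (x₀ + (κ * ρ ε / (1 + κ * ρ ε)) • d) = 1 ∧
        ∀ y, e ⬝ᵥ y = 1 → y ≠ x₀ + (κ * ρ ε / (1 + κ * ρ ε)) • d →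
          robustObjective A r κ √ε (x₀ + (κ * ρ ε / (1 + κ * ρ ε)) • d)
            < robustObjective A r κ √ε y := by
  have hAs : A.IsSymm := isHermitian_iff_isSymm.mp hA.isHermitian
  have hm : 0 < m := by
    have hq := hA.dotProduct_mulVec_pos (x := x₀) (by rintro rfl; simp at hex₀)
    rwa [star_trivial, hAx₀, dotProduct_smul, dotProduct_comm, hex₀, smul_eq_mul,
      mul_one] at hq
  choose! ρ hρ hroot using fun ε (hε : 0 < ε) => exists_pos_mul_sq_div_four_eq hε hκ hm
    (hA.posSemidef.dotProduct_mulVec_self_nonneg d)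
  set x := fun ε => x₀ + (κ * ρ ε / (1 + κ * ρ ε)) • d
  have hex : ∀ ε, e ⬝ᵥ x ε = 1 := fun ε => by
    rw [dotProduct_add, dotProduct_smul, hed, hex₀, smul_zero, add_zero]
  have hsqrt : ∀ ε > 0, √(x ε ⬝ᵥ A *ᵥ x ε) = √ε * ρ ε / 2 := fun ε hε => by
    have := hρ ε hε
    rw [dotProduct_mulVec_add_smul_of_mulVec_eq_smul hAs hex₀ hAx₀ hed, ← hroot ε hε,
      show ε * ρ ε ^ 2 / 4 = (√ε * ρ ε / 2) ^ 2 by rw [div_pow, mul_pow, Real.sq_sqrt hε.le]; ring,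
      Real.sqrt_sq (by positivity)]
  have hmin : ∀ ε > 0, ∀ y, e ⬝ᵥ y = 1 → y ≠ x ε →
      robustObjective A r κ √ε (x ε) < robustObjective A r κ √ε y := fun ε hε _ hey hy =>
    robustObjective_lt_of_sqrt_eq hA hκ hε (hρ ε hε) hex₀ hAx₀ hed hAd (hsqrt ε hε) hey hy
  have hle : ∀ ε > 0, ∀ ε' > 0,
      robustObjective A r κ √ε (x ε) ≤ robustObjective A r κ √ε (x ε') := fun ε hε ε' _ => by
    rcases eq_or_ne (x ε') (x ε) with h | h
    · rw [h]
    · exact (hmin ε hε _ (hex ε') h).le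
  exact ⟨ρ, hρ, strictAntiOn_of_robustObjective_le hρ hsqrt hle, fun ε hε => ⟨hex ε, hmin ε hε⟩⟩

theorem div_one_add_smul_add_one_div_one_add_smul {E : Type*} [AddCommGroup E] [Module ℝ E]
    {a : ℝ} (ha : 1 + a ≠ 0) (u v : E) :
    (a / (1 + a)) • u + (1 / (1 + a)) • v = v + (a / (1 + a)) • (u - v) := by
  rw [show 1 / (1 + a) = 1 - a / (1 + a) by field_simp; ring]
  module

theorem stmt4_general (n : ℕ) (hn : 1 ≤ n) (A : Matrix (Fin n) (Fin n) ℝ)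
    (hA : A.PosDef)
    (e : Fin n → ℝ) (he : e = fun _ => 1)
    (β : ℝ) (hβ : β = e ⬝ᵥ A⁻¹ *ᵥ e)
    (xMIN : Fin n → ℝ) (hxMIN : xMIN = β⁻¹ • (A⁻¹ *ᵥ e))
    (κ : ℝ) (hκ : 0 < κ) (rbar : Fin n → ℝ)
    (xMV : Fin n → ℝ)
    (hxMV : xMV = (1 / (2 * κ)) •
        ((A⁻¹ - β⁻¹ • vecMulVec (A⁻¹ *ᵥ e) (e ᵥ* A⁻¹)) *ᵥ rbar) + xMIN) :
    ∃ ρstar : ℝ → ℝ,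
      (∀ ε : ℝ, 0 < ε → 0 < ρstar ε) ∧
      StrictAntiOn ρstar (Set.Ioi 0) ∧
      ∀ ε : ℝ, 0 < ε →
        e ⬝ᵥ ((κ * ρstar ε / (1 + κ * ρstar ε)) • xMV
            + (1 / (1 + κ * ρstar ε)) • xMIN) = 1 ∧
        ∀ y : Fin n → ℝ, e ⬝ᵥ y = 1 →
          y ≠ (κ * ρstar ε / (1 + κ * ρstar ε)) • xMV
              + (1 / (1 + κ * ρstar ε)) • xMIN →
          (κ * (((κ * ρstar ε / (1 + κ * ρstar ε)) • xMV
                + (1 / (1 + κ * ρstar ε)) • xMIN) ⬝ᵥ A *ᵥ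
                ((κ * ρstar ε / (1 + κ * ρstar ε)) • xMV
                + (1 / (1 + κ * ρstar ε)) • xMIN))
            + Real.sqrt ε * Real.sqrt (((κ * ρstar ε / (1 + κ * ρstar ε)) • xMV
                + (1 / (1 + κ * ρstar ε)) • xMIN) ⬝ᵥ A *ᵥ
                ((κ * ρstar ε / (1 + κ * ρstar ε)) • xMV
                + (1 / (1 + κ * ρstar ε)) • xMIN))
            - rbar ⬝ᵥ ((κ * ρstar ε / (1 + κ * ρstar ε)) • xMV
                + (1 / (1 + κ * ρstar ε)) • xMIN))
          < κ * (y ⬝ᵥ A *ᵥ y) + Real.sqrt ε * Real.sqrt (y ⬝ᵥ A *ᵥ y) - rbar ⬝ᵥ y := by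
  have hdet : IsUnit A.det := hA.isUnit.map detMonoidHom
  have he0 : e ≠ 0 := fun h => by simpa [he] using congrFun h ⟨0, hn⟩
  have hβ0 : e ⬝ᵥ A⁻¹ *ᵥ e ≠ 0 := by simpa using (hA.inv.dotProduct_mulVec_pos he0).ne'
  have hex₀ : e ⬝ᵥ xMIN = 1 := by
    rw [hxMIN, dotProduct_smul, ← hβ, smul_eq_mul, inv_mul_cancel₀ (hβ ▸ hβ0)]
  have hAx₀ : A *ᵥ xMIN = β⁻¹ • e := by
    rw [hxMIN, mulVec_smul, mulVec_mulVec, mul_nonsing_inv A hdet, one_mulVec]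
  have hd : xMV - xMIN
      = (1 / (2 * κ)) • ((A⁻¹ - β⁻¹ • vecMulVec (A⁻¹ *ᵥ e) (e ᵥ* A⁻¹)) *ᵥ rbar) := by
    rw [hxMV, add_sub_cancel_right]
  have hed : e ⬝ᵥ (xMV - xMIN) = 0 := by
    rw [hd, dotProduct_smul, hβ, dotProduct_sub_smul_vecMulVec_mulVec hβ0, smul_zero]
  have hAd : A *ᵥ (xMV - xMIN)
      = (1 / (2 * κ)) • rbar + (-(1 / (2 * κ) * (β⁻¹ * (e ᵥ* A⁻¹ ⬝ᵥ rbar)))) • e := by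
    rw [hd, mulVec_smul, mulVec_sub_smul_vecMulVec_mulVec hdet]
    module
  obtain ⟨ρ, hρ, hanti, hmin⟩ :=
    exists_strictAntiOn_robustObjective_minimizer hA hκ hex₀ hAx₀ hed hAd
  refine ⟨ρ, hρ, hanti, fun ε hε => ?_⟩
  rw [div_one_add_smul_add_one_div_one_add_smul (by linarith [mul_pos hκ (hρ ε hε)]) xMV xMIN]
  exact hmin ε hε

/-- for each `ε > 0` the robust mean–variance objective
`x ↦ κ xᵀΣx + √ε √(xᵀΣx) − r̄ᵀx` has a unique minimizer over `C`, and there is a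
strictly decreasing `ρ* : (0,∞) → (0,∞)` such that this minimizer equals the
convex combination `(κρ*(ε)/(1+κρ*(ε))) x_MV + (1/(1+κρ*(ε))) x_MIN`. -/
theorem stmt4 (n : ℕ) (hn : 1 ≤ n) (A : Matrix (Fin n) (Fin n) ℝ)
    (hA : A.PosDef) (hAs : A.IsSymm)
    (e : Fin n → ℝ) (he : e = fun _ => 1)
    (β : ℝ) (hβ : β = e ⬝ᵥ A⁻¹ *ᵥ e)
    (xMIN : Fin n → ℝ) (hxMIN : xMIN = β⁻¹ • (A⁻¹ *ᵥ e))
    (κ : ℝ) (hκ : 0 < κ) (rbar : Fin n → ℝ)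
    (xMV : Fin n → ℝ)
    (hxMV : xMV = (1 / (2 * κ)) •
        ((A⁻¹ - β⁻¹ • vecMulVec (A⁻¹ *ᵥ e) (e ᵥ* A⁻¹)) *ᵥ rbar) + xMIN) :
    ∃ ρstar : ℝ → ℝ,
      (∀ ε : ℝ, 0 < ε → 0 < ρstar ε) ∧
      StrictAntiOn ρstar (Set.Ioi 0) ∧
      ∀ ε : ℝ, 0 < ε →
        e ⬝ᵥ ((κ * ρstar ε / (1 + κ * ρstar ε)) • xMV
            + (1 / (1 + κ * ρstar ε)) • xMIN) = 1 ∧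
        ∀ y : Fin n → ℝ, e ⬝ᵥ y = 1 →
          y ≠ (κ * ρstar ε / (1 + κ * ρstar ε)) • xMV
              + (1 / (1 + κ * ρstar ε)) • xMIN →
          (κ * (((κ * ρstar ε / (1 + κ * ρstar ε)) • xMV
                + (1 / (1 + κ * ρstar ε)) • xMIN) ⬝ᵥ A *ᵥ
                ((κ * ρstar ε / (1 + κ * ρstar ε)) • xMV
                + (1 / (1 + κ * ρstar ε)) • xMIN))
            + Real.sqrt ε * Real.sqrt (((κ * ρstar ε / (1 + κ * ρstar ε)) • xMV
                + (1 / (1 + κ * ρstar ε)) • xMIN) ⬝ᵥ A *ᵥ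
                ((κ * ρstar ε / (1 + κ * ρstar ε)) • xMV
                + (1 / (1 + κ * ρstar ε)) • xMIN))
            - rbar ⬝ᵥ ((κ * ρstar ε / (1 + κ * ρstar ε)) • xMV
                + (1 / (1 + κ * ρstar ε)) • xMIN))
          < κ * (y ⬝ᵥ A *ᵥ y) + Real.sqrt ε * Real.sqrt (y ⬝ᵥ A *ᵥ y) - rbar ⬝ᵥ y :=
  stmt4_general n hn A hA e he β hβ xMIN hxMIN κ hκ rbar xMV hxMV
end

section
/- Let κ > 0, ε ≥ 0, r̄ ∈ ℝⁿ, and set Σ̃ = Σ + (√ε/κ)I. Then the vector x = (1/(2κ))( Σ̃⁻¹ − Σ̃⁻¹e eᵀΣ̃⁻¹/(eᵀΣ̃⁻¹e) ) r̄ + Σ̃⁻¹e/(eᵀΣ̃⁻¹e) is the unique minimizer of the function x ↦ κ xᵀΣx − r̄ᵀx + √ε·‖x‖₂² over C. -/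
open Matrix

/-!
With `Σ̃ = Σ + (√ε/κ)I` the objective is `y ⬝ (κΣ̃) y − r̄ ⬝ y`, a strictly convex quadratic.
The vector `x*` lies on `C` and satisfies the Lagrange condition `2κΣ̃x* = r̄ + μe` for some `μ`;
writing a feasible `y` as `x* + d` with `e ⬝ d = 0`, the objective increases by exactly
`d ⬝ (κΣ̃) d > 0`.
-/

section

variable {ι : Type*} [Fintype ι]

lemma Matrix.IsHermitian.dotProduct_mulVec_comm {Q : Matrix ι ι ℝ} (hQ : Q.IsHermitian)
    (u v : ι → ℝ) : u ⬝ᵥ Q *ᵥ v = v ⬝ᵥ Q *ᵥ u := by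
  have hQt : Qᵀ = Q := by simpa [conjTranspose_eq_transpose_of_trivial] using hQ.eq
  rw [dotProduct_mulVec, ← mulVec_transpose, hQt, dotProduct_comm]

theorem Matrix.PosDef.dotProduct_mulVec_sub_dotProduct_lt {Q : Matrix ι ι ℝ} (hQ : Q.PosDef)
    {b e x y : ι → ℝ} {μ : ℝ} (hx : (2 : ℝ) • (Q *ᵥ x) = b + μ • e)
    (hyx : e ⬝ᵥ y = e ⬝ᵥ x) (hne : y ≠ x) :
    x ⬝ᵥ Q *ᵥ x - b ⬝ᵥ x < y ⬝ᵥ Q *ᵥ y - b ⬝ᵥ y := by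
  set d := y - x
  have hd : 0 < d ⬝ᵥ Q *ᵥ d := by
    simpa only [star_trivial] using hQ.dotProduct_mulVec_pos (sub_ne_zero.mpr hne)
  have hde : d ⬝ᵥ e = 0 := by
    rw [dotProduct_comm, dotProduct_sub, hyx, sub_self]
  have hdx : 2 * (d ⬝ᵥ Q *ᵥ x) = d ⬝ᵥ b := by
    rw [← smul_eq_mul, ← dotProduct_smul, hx, dotProduct_add,
      dotProduct_smul, hde, smul_zero, add_zero]
  have hy : y = x + d := by simp [d]
  rw [hy, mulVec_add, dotProduct_add, add_dotProduct, add_dotProduct,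
    hQ.isHermitian.dotProduct_mulVec_comm x d, dotProduct_add, dotProduct_comm b d]
  linarith

lemma Matrix.sub_smul_vecMulVec_mulVec (B : Matrix ι ι ℝ) (c : ℝ) (e r : ι → ℝ) :
    (B - c • vecMulVec (B *ᵥ e) (e ᵥ* B)) *ᵥ r = B *ᵥ r - (c * (e ⬝ᵥ B *ᵥ r)) • (B *ᵥ e) := by
  rw [sub_mulVec, smul_mulVec, vecMulVec_mulVec, op_smul_eq_smul, ← dotProduct_mulVec,
    smul_smul]

end

theorem stmt7_general (n : ℕ) (hn : 1 ≤ n) (A : Matrix (Fin n) (Fin n) ℝ)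
    (hA : A.PosDef)
    (e : Fin n → ℝ) (he : e = fun _ => 1)
    (κ ε : ℝ) (hκ : 0 < κ)
    (Atil : Matrix (Fin n) (Fin n) ℝ)
    (hAtil : Atil = A + (Real.sqrt ε / κ) • (1 : Matrix (Fin n) (Fin n) ℝ))
    (rbar : Fin n → ℝ) (xstar : Fin n → ℝ)
    (hxstar : xstar = (1 / (2 * κ)) •
        ((Atil⁻¹ - (e ⬝ᵥ Atil⁻¹ *ᵥ e)⁻¹ •
          vecMulVec (Atil⁻¹ *ᵥ e) (e ᵥ* Atil⁻¹)) *ᵥ rbar)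
      + (e ⬝ᵥ Atil⁻¹ *ᵥ e)⁻¹ • (Atil⁻¹ *ᵥ e)) :
    e ⬝ᵥ xstar = 1 ∧
    ∀ y : Fin n → ℝ, e ⬝ᵥ y = 1 → y ≠ xstar →
      κ * (xstar ⬝ᵥ A *ᵥ xstar) - rbar ⬝ᵥ xstar + Real.sqrt ε * (xstar ⬝ᵥ xstar) <
        κ * (y ⬝ᵥ A *ᵥ y) - rbar ⬝ᵥ y + Real.sqrt ε * (y ⬝ᵥ y) := by
  have hAtilPD : Atil.PosDef := hAtil ▸ hA.add_posSemidef (PosSemidef.one.smul (by positivity))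
  have he0 : e ≠ 0 := fun h => by simpa [he] using congrFun h ⟨0, hn⟩
  set B := Atil⁻¹
  set s := e ⬝ᵥ B *ᵥ e
  have hs : 0 < s := by simpa only [star_trivial] using hAtilPD.inv.dotProduct_mulVec_pos he0
  rw [sub_smul_vecMulVec_mulVec] at hxstar
  have hAtilB : Atil * B = 1 := mul_nonsing_inv _ ((isUnit_iff_isUnit_det _).mp hAtilPD.isUnit)
  have hfeas : e ⬝ᵥ xstar = 1 := by
    rw [hxstar]
    simp only [dotProduct_add, dotProduct_smul, dotProduct_sub, smul_eq_mul]
    field_simp [hs.ne']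
    ring
  have hlagrange :
      (2 : ℝ) • ((κ • Atil) *ᵥ xstar) = rbar + ((2 * κ - e ⬝ᵥ B *ᵥ rbar) / s) • e := by
    rw [smul_mulVec, hxstar]
    simp only [mulVec_smul, mulVec_add, mulVec_sub, mulVec_mulVec, hAtilB, one_mulVec]
    ext i
    simp only [Pi.add_apply, Pi.smul_apply, Pi.sub_apply, smul_eq_mul]
    field_simp
    ring
  have hobjective : ∀ y : Fin n → ℝ,
      κ * (y ⬝ᵥ A *ᵥ y) - rbar ⬝ᵥ y + Real.sqrt ε * (y ⬝ᵥ y)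
        = y ⬝ᵥ (κ • Atil) *ᵥ y - rbar ⬝ᵥ y := fun y => by
    rw [hAtil, smul_add, smul_smul, add_mulVec, smul_mulVec, smul_mulVec, one_mulVec,
      dotProduct_add, dotProduct_smul, dotProduct_smul, smul_eq_mul, smul_eq_mul,
      mul_div_cancel₀ _ hκ.ne']
    ring
  refine ⟨hfeas, fun y hy hne => ?_⟩
  rw [hobjective, hobjective]
  exact (hAtilPD.smul hκ).dotProduct_mulVec_sub_dotProduct_lt hlagrange (hy.trans hfeas.symm) hne

/-- for `κ > 0`, `ε ≥ 0`, `Σ̃ = Σ + (√ε/κ)I`, the vector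
`(1/(2κ))(Σ̃⁻¹ − Σ̃⁻¹e eᵀΣ̃⁻¹/(eᵀΣ̃⁻¹e)) r̄ + Σ̃⁻¹e/(eᵀΣ̃⁻¹e)` is the unique
minimizer of `x ↦ κ xᵀΣx − r̄ᵀx + √ε ‖x‖₂²` over `C = {x : eᵀx = 1}`. -/
theorem stmt7 (n : ℕ) (hn : 1 ≤ n) (A : Matrix (Fin n) (Fin n) ℝ)
    (hA : A.PosDef) (hAs : A.IsSymm)
    (e : Fin n → ℝ) (he : e = fun _ => 1)
    (κ ε : ℝ) (hκ : 0 < κ) (hε : 0 ≤ ε)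
    (Atil : Matrix (Fin n) (Fin n) ℝ)
    (hAtil : Atil = A + (Real.sqrt ε / κ) • (1 : Matrix (Fin n) (Fin n) ℝ))
    (rbar : Fin n → ℝ) (xstar : Fin n → ℝ)
    (hxstar : xstar = (1 / (2 * κ)) •
        ((Atil⁻¹ - (e ⬝ᵥ Atil⁻¹ *ᵥ e)⁻¹ •
          vecMulVec (Atil⁻¹ *ᵥ e) (e ᵥ* Atil⁻¹)) *ᵥ rbar)
      + (e ⬝ᵥ Atil⁻¹ *ᵥ e)⁻¹ • (Atil⁻¹ *ᵥ e)) :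
    e ⬝ᵥ xstar = 1 ∧
    ∀ y : Fin n → ℝ, e ⬝ᵥ y = 1 → y ≠ xstar →
      κ * (xstar ⬝ᵥ A *ᵥ xstar) - rbar ⬝ᵥ xstar + Real.sqrt ε * (xstar ⬝ᵥ xstar) <
        κ * (y ⬝ᵥ A *ᵥ y) - rbar ⬝ᵥ y + Real.sqrt ε * (y ⬝ᵥ y) :=
  stmt7_general n hn A hA e he κ ε hκ Atil hAtil rbar xstar hxstar
end

section
/- Let λ_[1] ≥ λ_[n] > 0 be the largest and smallest eigenvalues of Σ, let cond(Σ) = λ_[1]/λ_[n] be its condition number, let x_MIN = Σ⁻¹e/(eᵀΣ⁻¹e) be the minimum-variance portfolio, and let x_EW = e/n be the equal-weighted portfolio. Then ‖x_MIN − x_EW‖₂ ≤ (1/√n) · cond(Σ) · ( cond(Σ) − 1 ). -/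
open Matrix

/-!
Put `u = Σ⁻¹e`, so that `x_MIN = u / eᵀu` and `‖x_MIN − x_EW‖² = uᵀu / (eᵀu)² − 1/n`.
As the spectrum of `Σ` lies in `[λₙ, λ₁]`, the matrix `(λ₁ − Σ)(Σ − λₙ)` is positive semidefinite;
its quadratic form at `u` gives `λ₁λₙ uᵀu + n ≤ (λ₁ + λₙ) eᵀu`, and AM–GM in `eᵀu` turns this into
the Kantorovich-type bound `‖x_MIN − x_EW‖² ≤ (κ − 1)² / (4κn)` with `κ = cond(Σ) ≥ 1`,
which is at most `κ²(κ − 1)² / n`.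
-/

namespace Matrix

variable {ι : Type*} [Fintype ι] [DecidableEq ι]

theorem mulVec_dotProduct_mulVec_of_mem_orthogonalGroup {U : Matrix ι ι ℝ}
    (hU : U ∈ orthogonalGroup ι ℝ) (a b : ι → ℝ) :
    (U *ᵥ a) ⬝ᵥ (U *ᵥ b) = a ⬝ᵥ b := by
  rw [dotProduct_mulVec, ← mulVec_transpose, mulVec_mulVec,
    ← conjTranspose_eq_transpose_of_trivial, ← star_eq_conjTranspose,
    Unitary.star_mul_self_of_mem hU, one_mulVec]

namespace IsHermitian

variable {A : Matrix ι ι ℝ} (hA : A.IsHermitian) {m M : ℝ}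

theorem smul_sub_mulVec_dotProduct_mulVec_sub_smul_nonneg
    (hspec : ∀ i, hA.eigenvalues i ∈ Set.Icc m M) (x : ι → ℝ) :
    0 ≤ (M • x - A *ᵥ x) ⬝ᵥ (A *ᵥ x - m • x) := by
  set U := hA.eigenvectorUnitary
  set c := star (U : Matrix ι ι ℝ) *ᵥ x
  have hx : x = (U : Matrix ι ι ℝ) *ᵥ c := by
    rw [mulVec_mulVec, Unitary.mul_star_self_of_mem U.2, one_mulVec]
  have hAx : A *ᵥ x = (U : Matrix ι ι ℝ) *ᵥ (diagonal hA.eigenvalues *ᵥ c) := by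
    conv_lhs => rw [hA.spectral_theorem]
    simp [U, c, mulVec_mulVec, Matrix.mul_assoc]
  clear_value c
  rw [hAx, hx, ← mulVec_smul, ← mulVec_smul, ← mulVec_sub, ← mulVec_sub,
    mulVec_dotProduct_mulVec_of_mem_orthogonalGroup U.2]
  -- in eigencoordinates `c` the form is `∑ i, (M - μᵢ) (μᵢ - m) cᵢ²`
  refine Finset.sum_nonneg fun i _ => ?_
  simp only [Pi.sub_apply, Pi.smul_apply, mulVec_diagonal, smul_eq_mul]
  obtain ⟨hmi, hMi⟩ := hspec i
  nlinarith [mul_nonneg (mul_nonneg (sub_nonneg.2 hMi) (sub_nonneg.2 hmi)) (sq_nonneg (c i))]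

theorem mul_dotProduct_self_add_le
    (hspec : ∀ i, hA.eigenvalues i ∈ Set.Icc m M) (x : ι → ℝ) :
    m * M * (x ⬝ᵥ x) + (A *ᵥ x) ⬝ᵥ (A *ᵥ x) ≤ (m + M) * (x ⬝ᵥ (A *ᵥ x)) := by
  have h := hA.smul_sub_mulVec_dotProduct_mulVec_sub_smul_nonneg hspec x
  simp only [sub_dotProduct, dotProduct_sub, smul_dotProduct, dotProduct_smul, smul_eq_mul,
    dotProduct_comm (A *ᵥ x) x] at h
  linarith

end IsHermitian

end Matrix

theorem inv_smul_sub_inv_smul_dotProduct_self {ι : Type*} [Fintype ι] {u e : ι → ℝ}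
    (hu : e ⬝ᵥ u ≠ 0) (he : e ⬝ᵥ e ≠ 0) :
    ((e ⬝ᵥ u)⁻¹ • u - (e ⬝ᵥ e)⁻¹ • e) ⬝ᵥ ((e ⬝ᵥ u)⁻¹ • u - (e ⬝ᵥ e)⁻¹ • e) =
      u ⬝ᵥ u / (e ⬝ᵥ u) ^ 2 - (e ⬝ᵥ e)⁻¹ := by
  simp only [sub_dotProduct, dotProduct_sub, smul_dotProduct, dotProduct_smul, smul_eq_mul,
    dotProduct_comm u e]
  field_simp
  ring

theorem div_sq_sub_inv_le_of_mul_add_le {m M s w n : ℝ} (hm : 0 < m) (hM : 0 < M)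
    (hs : 0 < s) (hn : 0 < n) (h : m * M * w + n ≤ (m + M) * s) :
    w / s ^ 2 - n⁻¹ ≤ (M - m) ^ 2 / (4 * m * M) / n := by
  have hw : w ≤ ((m + M) * s - n) / (m * M) := by
    rw [le_div_iff₀ (by positivity)]
    linarith
  calc w / s ^ 2 - n⁻¹ ≤ ((m + M) * s - n) / (m * M) / s ^ 2 - n⁻¹ := by gcongr
    _ = (M - m) ^ 2 / (4 * m * M) / n - ((m + M) * s - 2 * n) ^ 2 / (4 * m * M * n * s ^ 2) := by
      field_simp
      ring
    _ ≤ (M - m) ^ 2 / (4 * m * M) / n := sub_le_self _ (by positivity)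

theorem sub_sq_div_le_div_sq_mul_div_sub_one_sq {m M : ℝ} (hm : 0 < m) (hmM : m ≤ M) :
    (M - m) ^ 2 / (4 * m * M) ≤ (M / m) ^ 2 * (M / m - 1) ^ 2 := by
  have hκ : 1 ≤ M / m := (one_le_div hm).2 hmM
  calc (M - m) ^ 2 / (4 * m * M) = (M / m - 1) ^ 2 / (4 * (M / m)) := by
        field_simp
    _ ≤ (M / m - 1) ^ 2 / 1 := by gcongr; linarith
    _ ≤ (M / m) ^ 2 * (M / m - 1) ^ 2 := by
      rw [div_one]
      exact le_mul_of_one_le_left (sq_nonneg _) (one_le_pow₀ hκ)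

theorem stmt9_general (n : ℕ) (hn : 1 ≤ n) (A : Matrix (Fin n) (Fin n) ℝ)
    (hA : A.PosDef)
    (e : Fin n → ℝ) (he : e = fun _ => 1)
    (lam1 lamn : ℝ) (hlamn : 0 < lamn)
    (hbetween : ∀ μ : ℝ, (∃ v : Fin n → ℝ, v ≠ 0 ∧ A *ᵥ v = μ • v) →
      lamn ≤ μ ∧ μ ≤ lam1)
    (xMIN xEW : Fin n → ℝ)
    (hxMIN : xMIN = (e ⬝ᵥ A⁻¹ *ᵥ e)⁻¹ • (A⁻¹ *ᵥ e))
    (hxEW : xEW = (n : ℝ)⁻¹ • e) :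
    Real.sqrt ((xMIN - xEW) ⬝ᵥ (xMIN - xEW)) ≤
      (1 / Real.sqrt n) * (lam1 / lamn) * (lam1 / lamn - 1) := by
  have hspec (i : Fin n) : hA.1.eigenvalues i ∈ Set.Icc lamn lam1 :=
    hbetween _ ⟨_, by simpa using hA.1.eigenvectorBasis.orthonormal.ne_zero i,
      hA.1.mulVec_eigenvectorBasis i⟩
  have hmM : lamn ≤ lam1 := (hspec ⟨0, hn⟩).1.trans (hspec ⟨0, hn⟩).2
  have hn0 : (0 : ℝ) < n := by exact_mod_cast hn
  have hee : e ⬝ᵥ e = n := by simp [he, dotProduct]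
  have he0 : e ≠ 0 := fun h ↦ hn0.ne' (by simpa [h] using hee.symm)
  set u := A⁻¹ *ᵥ e
  have hAu : A *ᵥ u = e := by
    rw [mulVec_mulVec, mul_nonsing_inv _ ((isUnit_iff_isUnit_det A).1 hA.isUnit), one_mulVec]
  have hs : 0 < e ⬝ᵥ u := by simpa using hA.inv.dotProduct_mulVec_pos he0
  have hkey := hA.1.mul_dotProduct_self_add_le hspec u
  rw [hAu, hee, dotProduct_comm u e] at hkey
  rw [Real.sqrt_le_left (by have := (one_le_div hlamn).2 hmM; positivity)]
  calc (xMIN - xEW) ⬝ᵥ (xMIN - xEW) = u ⬝ᵥ u / (e ⬝ᵥ u) ^ 2 - (n : ℝ)⁻¹ := by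
        rw [hxMIN, hxEW, ← hee]
        exact inv_smul_sub_inv_smul_dotProduct_self hs.ne' (hee ▸ hn0.ne')
    _ ≤ (lam1 - lamn) ^ 2 / (4 * lamn * lam1) / n :=
        div_sq_sub_inv_le_of_mul_add_le hlamn (hlamn.trans_le hmM) hs hn0 hkey
    _ ≤ (lam1 / lamn) ^ 2 * (lam1 / lamn - 1) ^ 2 / n := by
        gcongr
        exact sub_sq_div_le_div_sq_mul_div_sub_one_sq hlamn hmM
    _ = (1 / Real.sqrt n * (lam1 / lamn) * (lam1 / lamn - 1)) ^ 2 := by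
        rw [mul_pow, mul_pow, one_div, inv_pow, Real.sq_sqrt hn0.le]
        ring

/-- with `λ₁ ≥ λₙ > 0` the largest and smallest eigenvalues of `Σ`,
`cond(Σ) = λ₁/λₙ`, `x_MIN = Σ⁻¹e/(eᵀΣ⁻¹e)` and `x_EW = e/n`:
`‖x_MIN − x_EW‖₂ ≤ (1/√n) cond(Σ) (cond(Σ) − 1)`. -/
theorem stmt9 (n : ℕ) (hn : 1 ≤ n) (A : Matrix (Fin n) (Fin n) ℝ)
    (hA : A.PosDef) (hAs : A.IsSymm)
    (e : Fin n → ℝ) (he : e = fun _ => 1)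
    (lam1 lamn : ℝ) (hlamn : 0 < lamn)
    (hlam1eig : ∃ v : Fin n → ℝ, v ≠ 0 ∧ A *ᵥ v = lam1 • v)
    (hlamneig : ∃ v : Fin n → ℝ, v ≠ 0 ∧ A *ᵥ v = lamn • v)
    (hbetween : ∀ μ : ℝ, (∃ v : Fin n → ℝ, v ≠ 0 ∧ A *ᵥ v = μ • v) →
      lamn ≤ μ ∧ μ ≤ lam1)
    (xMIN xEW : Fin n → ℝ)
    (hxMIN : xMIN = (e ⬝ᵥ A⁻¹ *ᵥ e)⁻¹ • (A⁻¹ *ᵥ e))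
    (hxEW : xEW = (n : ℝ)⁻¹ • e) :
    Real.sqrt ((xMIN - xEW) ⬝ᵥ (xMIN - xEW)) ≤
      (1 / Real.sqrt n) * (lam1 / lamn) * (lam1 / lamn - 1) :=
  stmt9_general n hn A hA e he lam1 lamn hlamn hbetween xMIN xEW hxMIN hxEW
end

section
/- Let s* ∈ ℤ with 2 ≤ s* ≤ N − 1 and Δ ∈ ℝ. If 0 < Δ ≤ min{ B₋(s*), B₊(s*) }, then there exists a minimizer s′ of the function s ↦ v_U(s; δ+Δ, φ) over {1, …, N} with s′ < s*. -/
open Finset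

/-- `v_U(s; δ, φ) = κσ²(1 − ρ + ρs + δ)/s − (Σ_{i=1}^s r̄_[i])/s + φs`. -/
noncomputable def vU (κ σ ρ δ φ : ℝ) (r : ℕ → ℝ) (s : ℕ) : ℝ :=
  κ * σ ^ 2 * (1 - ρ + ρ * s + δ) / s - (∑ i ∈ Finset.Icc 1 s, r i) / s + φ * s

/-- `B₋(s*) = ρ − δ − 1 − (1/(κσ²)) min_{1 ≤ l < s*}
  ((l Σ_{i≤s*} r̄_[i] − s* Σ_{i≤l} r̄_[i])/(s* − l) − φ s* l)`. -/
noncomputable def Bminus (κ σ ρ δ φ : ℝ) (r : ℕ → ℝ) (sstar : ℕ) : ℝ :=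
  ρ - δ - 1 - (1 / (κ * σ ^ 2)) *
    sInf {y : ℝ | ∃ l : ℕ, 1 ≤ l ∧ l < sstar ∧
      y = ((l : ℝ) * (∑ i ∈ Finset.Icc 1 sstar, r i)
            - (sstar : ℝ) * (∑ i ∈ Finset.Icc 1 l, r i)) / ((sstar : ℝ) - (l : ℝ))
          - φ * (sstar : ℝ) * (l : ℝ)}

/-- `B₊(s*) = ρ − δ − 1 + (1/(κσ²)) min_{s* < l ≤ N}
  ((l Σ_{i≤s*} r̄_[i] − s* Σ_{i≤l} r̄_[i])/(l − s*) + φ s* l)`. -/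
noncomputable def Bplus (N : ℕ) (κ σ ρ δ φ : ℝ) (r : ℕ → ℝ) (sstar : ℕ) : ℝ :=
  ρ - δ - 1 + (1 / (κ * σ ^ 2)) *
    sInf {y : ℝ | ∃ l : ℕ, sstar < l ∧ l ≤ N ∧
      y = ((l : ℝ) * (∑ i ∈ Finset.Icc 1 sstar, r i)
            - (sstar : ℝ) * (∑ i ∈ Finset.Icc 1 l, r i)) / ((l : ℝ) - (sstar : ℝ))
          + φ * (sstar : ℝ) * (l : ℝ)}

/-!
For levels `l < s`, `v_U(l) - v_U(s)` is the positive factor `(s - l) / (l s)` times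
`κσ²(1 - ρ + δ) - crossover φ r l s`, so `v_U(l) ≤ v_U(s)` as soon as `κσ²(1 - ρ + δ)` is at most
the crossover value. With `δ` replaced by `δ + Δ`, the bound `Δ ≤ B₋(s*)` is exactly this
condition for the level `l₀ < s*` attaining the minimum in `B₋`, giving `v_U(l₀) ≤ v_U(s*)`,
while `Δ ≤ B₊(s*)` gives `v_U(s*) ≤ v_U(l)` for every `l > s*`. Hence a minimizer of `v_U`
over `{1, …, s* - 1}` is a minimizer over `{1, …, N}`.
-/

/-- The value of `κσ²(1 - ρ + δ)` at which `v_U(l) = v_U(s)`. -/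
noncomputable def crossover (φ : ℝ) (r : ℕ → ℝ) (l s : ℕ) : ℝ :=
  ((s : ℝ) * ∑ i ∈ Icc 1 l, r i - (l : ℝ) * ∑ i ∈ Icc 1 s, r i) / ((s : ℝ) - l)
    + φ * s * l

section Comparison

variable (κ σ ρ δ φ : ℝ) (r : ℕ → ℝ)

theorem vU_sub_vU {l s : ℕ} (hl : 1 ≤ l) (hls : l < s) :
    vU κ σ ρ δ φ r l - vU κ σ ρ δ φ r s
      = ((s : ℝ) - l) / (l * s) * (κ * σ ^ 2 * (1 - ρ + δ) - crossover φ r l s) := by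
  have hl0 : (l : ℝ) ≠ 0 := Nat.cast_ne_zero.mpr (by omega)
  have hs0 : (s : ℝ) ≠ 0 := Nat.cast_ne_zero.mpr (by omega)
  have hsl : (s : ℝ) - l ≠ 0 := sub_ne_zero.mpr (by exact_mod_cast hls.ne')
  unfold vU crossover
  field_simp
  ring

theorem vU_le_vU_of_le_crossover {l s : ℕ} (hl : 1 ≤ l) (hls : l < s)
    (h : κ * σ ^ 2 * (1 - ρ + δ) ≤ crossover φ r l s) :
    vU κ σ ρ δ φ r l ≤ vU κ σ ρ δ φ r s := by
  have hls' : (l : ℝ) ≤ s := by exact_mod_cast hls.le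
  rw [← sub_nonpos, vU_sub_vU κ σ ρ δ φ r hl hls]
  exact mul_nonpos_of_nonneg_of_nonpos (div_nonneg (sub_nonneg.mpr hls') (by positivity))
    (sub_nonpos.mpr h)

end Comparison

section Thresholds

variable {κ σ ρ δ φ : ℝ} {r : ℕ → ℝ}

theorem Bminus_eq (s : ℕ) :
    Bminus κ σ ρ δ φ r s
      = ρ - δ - 1 - 1 / (κ * σ ^ 2) * sInf ((fun l ↦ -crossover φ r l s) '' Set.Ico 1 s) := by
  unfold Bminus crossover
  congr 3
  ext y
  simp only [Set.mem_ofPred_eq, Set.mem_image, Set.mem_Ico]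
  refine exists_congr fun l ↦ ?_
  constructor
  · rintro ⟨h1, h2, rfl⟩; exact ⟨⟨h1, h2⟩, by ring⟩
  · rintro ⟨⟨h1, h2⟩, rfl⟩; exact ⟨h1, h2, by ring⟩

theorem Bplus_eq (N s : ℕ) :
    Bplus N κ σ ρ δ φ r s
      = ρ - δ - 1 + 1 / (κ * σ ^ 2) * sInf (crossover φ r s '' Set.Ioc s N) := by
  unfold Bplus crossover
  congr 3
  ext y
  simp only [Set.mem_ofPred_eq, Set.mem_image, Set.mem_Ioc]
  refine exists_congr fun l ↦ ?_
  constructor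
  · rintro ⟨h1, h2, rfl⟩; exact ⟨⟨h1, h2⟩, by ring⟩
  · rintro ⟨⟨h1, h2⟩, rfl⟩; exact ⟨h1, h2, by ring⟩

variable {Δ : ℝ}

theorem exists_vU_le_vU_of_le_Bminus (hc : 0 < κ * σ ^ 2) {s : ℕ} (hs : 2 ≤ s)
    (h : Δ ≤ Bminus κ σ ρ δ φ r s) :
    ∃ l, 1 ≤ l ∧ l < s ∧ vU κ σ ρ (δ + Δ) φ r l ≤ vU κ σ ρ (δ + Δ) φ r s := by
  have hne : (Set.Ico 1 s).Nonempty := ⟨1, le_rfl, by omega⟩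
  obtain ⟨l, ⟨hl1, hls⟩, hmin⟩ :=
    (hne.image _).csInf_mem ((Set.finite_Ico 1 s).image fun l ↦ -crossover φ r l s)
  refine ⟨l, hl1, hls, vU_le_vU_of_le_crossover κ σ ρ _ φ r hl1 hls ?_⟩
  rw [Bminus_eq, ← hmin, one_div_mul_eq_div] at h
  have := (div_le_iff₀ hc).mp (by linarith : -crossover φ r l s / (κ * σ ^ 2) ≤ ρ - δ - 1 - Δ)
  linarith

theorem vU_le_vU_of_le_Bplus (hc : 0 < κ * σ ^ 2) {N s : ℕ} (hs : 1 ≤ s)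
    (h : Δ ≤ Bplus N κ σ ρ δ φ r s) {l : ℕ} (hsl : s < l) (hlN : l ≤ N) :
    vU κ σ ρ (δ + Δ) φ r s ≤ vU κ σ ρ (δ + Δ) φ r l := by
  refine vU_le_vU_of_le_crossover κ σ ρ _ φ r hs hsl ?_
  have hinf : sInf (crossover φ r s '' Set.Ioc s N) ≤ crossover φ r s l :=
    csInf_le ((Set.finite_Ioc s N).image _).bddBelow ⟨l, ⟨hsl, hlN⟩, rfl⟩
  rw [Bplus_eq, one_div_mul_eq_div] at h
  have := (le_div_iff₀ hc).mp
    (by linarith [div_le_div_of_nonneg_right hinf hc.le] :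
      Δ - ρ + δ + 1 ≤ crossover φ r s l / (κ * σ ^ 2))
  linarith

end Thresholds

theorem exists_minimizer_lt {α : Type*} [LinearOrder α] {f : ℕ → α} {a N : ℕ} (haN : a ≤ N)
    {l₀ : ℕ} (hl₀ : 1 ≤ l₀) (hl₀a : l₀ < a) (hl₀_le : f l₀ ≤ f a)
    (ha_le : ∀ s, a < s → s ≤ N → f a ≤ f s) :
    ∃ s', 1 ≤ s' ∧ s' ≤ N ∧ s' < a ∧ ∀ s, 1 ≤ s → s ≤ N → f s' ≤ f s := by
  obtain ⟨s', hs', hmin⟩ := exists_min_image (Ico 1 a) f ⟨l₀, mem_Ico.mpr ⟨hl₀, hl₀a⟩⟩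
  rw [mem_Ico] at hs'
  refine ⟨s', hs'.1, by omega, hs'.2, fun s hs hsN ↦ ?_⟩
  have hs'_le_a : f s' ≤ f a := (hmin l₀ (mem_Ico.mpr ⟨hl₀, hl₀a⟩)).trans hl₀_le
  rcases lt_trichotomy s a with hsa | rfl | has
  · exact hmin s (mem_Ico.mpr ⟨hs, hsa⟩)
  · exact hs'_le_a
  · exact hs'_le_a.trans (ha_le s has hsN)

theorem stmt10_general (N : ℕ) (κ σ ρ δ φ : ℝ)
    (hκ : 0 < κ) (hσ : 0 < σ)
    (r : ℕ → ℝ)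
    (sstar : ℕ) (hs1 : 2 ≤ sstar) (hs2 : sstar ≤ N - 1)
    (Δ : ℝ)
    (hΔle : Δ ≤ min (Bminus κ σ ρ δ φ r sstar) (Bplus N κ σ ρ δ φ r sstar)) :
    ∃ s' : ℕ, 1 ≤ s' ∧ s' ≤ N ∧ s' < sstar ∧
      ∀ s : ℕ, 1 ≤ s → s ≤ N →
        vU κ σ ρ (δ + Δ) φ r s' ≤ vU κ σ ρ (δ + Δ) φ r s := by
  have hc : 0 < κ * σ ^ 2 := by positivity
  obtain ⟨l₀, hl₀, hl₀s, hl₀_le⟩ :=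
    exists_vU_le_vU_of_le_Bminus hc hs1 (hΔle.trans (min_le_left _ _))
  exact exists_minimizer_lt (by omega) hl₀ hl₀s hl₀_le fun s hs hsN ↦
    vU_le_vU_of_le_Bplus hc (by omega) (hΔle.trans (min_le_right _ _)) hs hsN

/-- Proposition 4, condition C1: if `0 < Δ ≤ min{B₋(s*), B₊(s*)}`
then there is a minimizer `s′` of `s ↦ v_U(s; δ+Δ, φ)` over `{1,…,N}` with `s′ < s*`. -/
theorem stmt10 (N : ℕ) (hN : 3 ≤ N) (κ σ ρ δ φ : ℝ)
    (hκ : 0 < κ) (hσ : 0 < σ) (hρ1 : -1 < ρ) (hρ2 : ρ < 1) (hδ : 0 ≤ δ) (hφ : 0 < φ)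
    (r : ℕ → ℝ) (hr : ∀ i j : ℕ, 1 ≤ i → i ≤ j → j ≤ N → r j ≤ r i)
    (sstar : ℕ) (hs1 : 2 ≤ sstar) (hs2 : sstar ≤ N - 1)
    (Δ : ℝ) (hΔpos : 0 < Δ)
    (hΔle : Δ ≤ min (Bminus κ σ ρ δ φ r sstar) (Bplus N κ σ ρ δ φ r sstar)) :
    ∃ s' : ℕ, 1 ≤ s' ∧ s' ≤ N ∧ s' < sstar ∧
      ∀ s : ℕ, 1 ≤ s → s ≤ N →
        vU κ σ ρ (δ + Δ) φ r s' ≤ vU κ σ ρ (δ + Δ) φ r s :=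
  stmt10_general N κ σ ρ δ φ hκ hσ r sstar hs1 hs2 Δ hΔle
end

section
/- Let s* ∈ ℤ with 2 ≤ s* ≤ N − 1 and Δ ∈ ℝ. If Δ ≥ max{0, B₋(s*), B₊(s*)}, then there exists a minimizer s′ of the function s ↦ v_U(s; δ+Δ, φ) over {1, …, N} with s′ > s*. -/
open Finset

lemma setOf_exists_Ioc_eq_image (f : ℕ → ℝ) (a b : ℕ) :
    {y : ℝ | ∃ l : ℕ, a < l ∧ l ≤ b ∧ y = f l} = f '' Set.Ioc a b := by
  ext y
  simp [eq_comm, and_assoc]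

lemma setOf_exists_Ico_eq_image (f : ℕ → ℝ) (a b : ℕ) :
    {y : ℝ | ∃ l : ℕ, a ≤ l ∧ l < b ∧ y = f l} = f '' Set.Ico a b := by
  ext y
  simp [eq_comm, and_assoc]

lemma vU_le_vU_of_chord_le (κ σ ρ δ φ : ℝ) (r : ℕ → ℝ) {a b : ℕ} (ha : 0 < a) (hab : a < b)
    (hchord : ((b : ℝ) * (∑ i ∈ Icc 1 a, r i) - (a : ℝ) * (∑ i ∈ Icc 1 b, r i)) / ((b : ℝ) - a)
        + φ * a * b ≤ κ * σ ^ 2 * (1 - ρ + δ)) :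
    vU κ σ ρ δ φ r b ≤ vU κ σ ρ δ φ r a := by
  set Sa := ∑ i ∈ Icc 1 a, r i
  set Sb := ∑ i ∈ Icc 1 b, r i
  set X := κ * σ ^ 2 * (1 - ρ + δ)
  have ha' : (0 : ℝ) < a := by exact_mod_cast ha
  have hba : (0 : ℝ) < b - a := sub_pos.mpr (by exact_mod_cast hab)
  have hb' : (0 : ℝ) < b := by linarith
  have hcross : b * Sa - a * Sb ≤ (X - φ * a * b) * (b - a) :=
    (div_le_iff₀ hba).mp (by linarith)
  have hdiff : vU κ σ ρ δ φ r a - vU κ σ ρ δ φ r b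
      = ((X - φ * a * b) * (b - a) - (b * Sa - a * Sb)) / (a * b) := by
    unfold vU
    field_simp
    ring
  rw [← sub_nonneg, hdiff]
  exact div_nonneg (by linarith) (by positivity)

section Thresholds

variable {N : ℕ} {κ σ ρ δ φ : ℝ} {r : ℕ → ℝ} {sstar : ℕ} {Δ : ℝ}

lemma exists_gt_vU_le_of_Bplus_le (hc : 0 < κ * σ ^ 2) (hs : 0 < sstar) (hsN : sstar < N)
    (hB : Bplus N κ σ ρ δ φ r sstar ≤ Δ) :
    ∃ l, sstar < l ∧ l ≤ N ∧ vU κ σ ρ (δ + Δ) φ r l ≤ vU κ σ ρ (δ + Δ) φ r sstar := by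
  set f : ℕ → ℝ := fun l =>
    ((l : ℝ) * (∑ i ∈ Icc 1 sstar, r i) - (sstar : ℝ) * (∑ i ∈ Icc 1 l, r i))
      / ((l : ℝ) - sstar) + φ * sstar * l
  have hB' : ρ - δ - 1 + (1 / (κ * σ ^ 2)) * sInf (f '' Set.Ioc sstar N) ≤ Δ := by
    rwa [Bplus, setOf_exists_Ioc_eq_image f] at hB
  have hnonempty : (f '' Set.Ioc sstar N).Nonempty :=
    ⟨f (sstar + 1), Set.mem_image_of_mem f ⟨Nat.lt_succ_self sstar, hsN⟩⟩
  obtain ⟨l, ⟨hl, hlN⟩, hfl⟩ := hnonempty.csInf_mem ((Set.finite_Ioc sstar N).image f)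
  refine ⟨l, hl, hlN, vU_le_vU_of_chord_le κ σ ρ (δ + Δ) φ r hs hl ?_⟩
  have hfl_le : f l ≤ κ * σ ^ 2 * (1 - ρ + (δ + Δ)) := by
    rw [hfl, ← div_le_iff₀' hc, ← one_div_mul_eq_div]
    linarith
  simp only [f] at hfl_le
  linarith

lemma vU_le_of_Bminus_le (hc : 0 < κ * σ ^ 2) (hB : Bminus κ σ ρ δ φ r sstar ≤ Δ)
    {l : ℕ} (hl : 0 < l) (hls : l < sstar) :
    vU κ σ ρ (δ + Δ) φ r sstar ≤ vU κ σ ρ (δ + Δ) φ r l := by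
  set f : ℕ → ℝ := fun l =>
    ((l : ℝ) * (∑ i ∈ Icc 1 sstar, r i) - (sstar : ℝ) * (∑ i ∈ Icc 1 l, r i))
      / ((sstar : ℝ) - l) - φ * sstar * l
  have hB' : ρ - δ - 1 - (1 / (κ * σ ^ 2)) * sInf (f '' Set.Ico 1 sstar) ≤ Δ := by
    rwa [Bminus, setOf_exists_Ico_eq_image f] at hB
  have hinf_le : sInf (f '' Set.Ico 1 sstar) ≤ f l :=
    csInf_le ((Set.finite_Ico 1 sstar).image f).bddBelow (Set.mem_image_of_mem f ⟨hl, hls⟩)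
  have hinf_ge : -(κ * σ ^ 2 * (1 - ρ + (δ + Δ))) ≤ sInf (f '' Set.Ico 1 sstar) := by
    rw [neg_le, ← div_le_iff₀' hc, neg_div, ← one_div_mul_eq_div]
    linarith
  apply vU_le_vU_of_chord_le κ σ ρ (δ + Δ) φ r hl hls
  have hsl : (sstar : ℝ) - l ≠ 0 := sub_ne_zero.mpr (by exact_mod_cast hls.ne')
  have hneg : ((sstar : ℝ) * (∑ i ∈ Icc 1 l, r i) - (l : ℝ) * (∑ i ∈ Icc 1 sstar, r i))
      / ((sstar : ℝ) - l) + φ * l * sstar = -f l := by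
    simp only [f]
    field_simp
    ring
  linarith

end Thresholds

theorem stmt12_general (N : ℕ) (κ σ ρ δ φ : ℝ)
    (hκ : 0 < κ) (hσ : 0 < σ)
    (r : ℕ → ℝ)
    (sstar : ℕ) (hs1 : 2 ≤ sstar) (hs2 : sstar ≤ N - 1)
    (Δ : ℝ)
    (hΔge : max 0 (max (Bminus κ σ ρ δ φ r sstar) (Bplus N κ σ ρ δ φ r sstar)) ≤ Δ) :
    ∃ s' : ℕ, 1 ≤ s' ∧ s' ≤ N ∧ sstar < s' ∧
      ∀ s : ℕ, 1 ≤ s → s ≤ N →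
        vU κ σ ρ (δ + Δ) φ r s' ≤ vU κ σ ρ (δ + Δ) φ r s := by
  have hc : 0 < κ * σ ^ 2 := by positivity
  have hsN : sstar < N := by omega
  obtain ⟨hBminus, hBplus⟩ := max_le_iff.mp (le_of_max_le_right hΔge)
  obtain ⟨l, hl, hlN, hvl⟩ := exists_gt_vU_le_of_Bplus_le hc (by omega) hsN hBplus
  obtain ⟨s', hs', hmin⟩ := exists_min_image (Ioc sstar N) (vU κ σ ρ (δ + Δ) φ r)
    ⟨l, mem_Ioc.mpr ⟨hl, hlN⟩⟩
  obtain ⟨hss', hs'N⟩ := mem_Ioc.mp hs'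
  refine ⟨s', by omega, hs'N, hss', fun s hs hsN' => ?_⟩
  rcases lt_or_ge sstar s with hss | hss
  · exact hmin s (mem_Ioc.mpr ⟨hss, hsN'⟩)
  · calc vU κ σ ρ (δ + Δ) φ r s' ≤ vU κ σ ρ (δ + Δ) φ r l := hmin l (mem_Ioc.mpr ⟨hl, hlN⟩)
      _ ≤ vU κ σ ρ (δ + Δ) φ r sstar := hvl
      _ ≤ vU κ σ ρ (δ + Δ) φ r s := by
        rcases hss.lt_or_eq with hlt | rfl
        · exact vU_le_of_Bminus_le hc hBminus hs hlt
        · exact le_rfl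

/-- Proposition 4, condition C3: if `Δ ≥ max{0, B₋(s*), B₊(s*)}`
then there is a minimizer `s′` of `s ↦ v_U(s; δ+Δ, φ)` over `{1,…,N}` with `s′ > s*`. -/
theorem stmt12 (N : ℕ) (hN : 3 ≤ N) (κ σ ρ δ φ : ℝ)
    (hκ : 0 < κ) (hσ : 0 < σ) (hρ1 : -1 < ρ) (hρ2 : ρ < 1) (hδ : 0 ≤ δ) (hφ : 0 < φ)
    (r : ℕ → ℝ) (hr : ∀ i j : ℕ, 1 ≤ i → i ≤ j → j ≤ N → r j ≤ r i)
    (sstar : ℕ) (hs1 : 2 ≤ sstar) (hs2 : sstar ≤ N - 1)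
    (Δ : ℝ)
    (hΔge : max 0 (max (Bminus κ σ ρ δ φ r sstar) (Bplus N κ σ ρ δ φ r sstar)) ≤ Δ) :
    ∃ s' : ℕ, 1 ≤ s' ∧ s' ≤ N ∧ sstar < s' ∧
      ∀ s : ℕ, 1 ≤ s → s ≤ N →
        vU κ σ ρ (δ + Δ) φ r s' ≤ vU κ σ ρ (δ + Δ) φ r s :=
  stmt12_general N κ σ ρ δ φ hκ hσ r sstar hs1 hs2 Δ hΔge
end

section
/- Suppose the sorted returns form an arithmetic progression r̄_[i] = r̄ − Δr·(i − 1) for i = 1, …, N, where 0 < Δr < r̄/(N − 1). Then for every s* with 2 ≤ s* ≤ N − 1: B₋(s*) = ρ − δ − 1 + s*(s* − 1)(Δr/2 + φ)/(κσ²) and B₊(s*) = ρ − δ − 1 + s*(s* + 1)(Δr/2 + φ)/(κσ²). -/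
open Finset

/-! For an arithmetic progression `Σ_{i ≤ s} r̄_[i] = s r̄ − Δr s(s − 1)/2`, so the numerator
`l Σ_{i ≤ s*} r̄_[i] − s* Σ_{i ≤ l} r̄_[i]` equals `Δr s* l (l − s*)/2`. The candidates in `B₋` and
`B₊` therefore become `∓ s* l (Δr/2 + φ)`, which are monotone in `l`: the minimum over `l < s*` is
attained at `l = s* − 1` and the one over `l > s*` at `l = s* + 1`. -/

section ArithmeticProgression

variable {N : ℕ} {a d : ℝ} {r : ℕ → ℝ}

theorem sum_Icc_one_eq_of_arith (hr : ∀ i : ℕ, 1 ≤ i → i ≤ N → r i = a - d * ((i : ℝ) - 1))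
    {s : ℕ} (hs : s ≤ N) : ∑ i ∈ Icc 1 s, r i = s * a - d * (s * (s - 1)) / 2 := by
  induction s with
  | zero => simp
  | succ n ih =>
    rw [sum_Icc_succ_top (Nat.le_add_left 1 n), ih (by omega), hr (n + 1) (by omega) hs]
    push_cast
    ring

theorem cross_sum_eq_of_arith (hr : ∀ i : ℕ, 1 ≤ i → i ≤ N → r i = a - d * ((i : ℝ) - 1))
    {s l : ℕ} (hs : s ≤ N) (hl : l ≤ N) :
    (l : ℝ) * ∑ i ∈ Icc 1 s, r i - s * ∑ i ∈ Icc 1 l, r i = d * s * l * (l - s) / 2 := by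
  rw [sum_Icc_one_eq_of_arith hr hs, sum_Icc_one_eq_of_arith hr hl]
  ring

theorem Bminus_set_eq_image (φ : ℝ)
    (hr : ∀ i : ℕ, 1 ≤ i → i ≤ N → r i = a - d * ((i : ℝ) - 1)) {s : ℕ} (hs : s ≤ N) :
    {y : ℝ | ∃ l : ℕ, 1 ≤ l ∧ l < s ∧
      y = ((l : ℝ) * (∑ i ∈ Icc 1 s, r i)
            - (s : ℝ) * (∑ i ∈ Icc 1 l, r i)) / ((s : ℝ) - (l : ℝ))
          - φ * (s : ℝ) * (l : ℝ)}
      = (fun l : ℕ => -((s : ℝ) * l * (d / 2 + φ))) '' Set.Ico 1 s := by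
  refine Set.ext fun y => exists_congr fun l => ?_
  rw [Set.mem_Ico, and_assoc]
  refine and_congr_right fun _ => and_congr_right fun hls => ?_
  have hsl : (s : ℝ) - l ≠ 0 := sub_ne_zero.2 (by exact_mod_cast hls.ne')
  rw [eq_comm, cross_sum_eq_of_arith hr hs (by omega)]
  refine Iff.of_eq (congrArg (· = y) ?_)
  field_simp
  ring

theorem Bplus_set_eq_image (φ : ℝ)
    (hr : ∀ i : ℕ, 1 ≤ i → i ≤ N → r i = a - d * ((i : ℝ) - 1)) {s : ℕ} (hs : s ≤ N) :
    {y : ℝ | ∃ l : ℕ, s < l ∧ l ≤ N ∧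
      y = ((l : ℝ) * (∑ i ∈ Icc 1 s, r i)
            - (s : ℝ) * (∑ i ∈ Icc 1 l, r i)) / ((l : ℝ) - (s : ℝ))
          + φ * (s : ℝ) * (l : ℝ)}
      = (fun l : ℕ => (s : ℝ) * l * (d / 2 + φ)) '' Set.Ioc s N := by
  refine Set.ext fun y => exists_congr fun l => ?_
  rw [Set.mem_Ioc, and_assoc]
  refine and_congr_right fun hsl => and_congr_right fun hl => ?_
  have hls : (l : ℝ) - s ≠ 0 := sub_ne_zero.2 (by exact_mod_cast hsl.ne')
  rw [eq_comm, cross_sum_eq_of_arith hr hs hl]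
  refine Iff.of_eq (congrArg (· = y) ?_)
  field_simp

end ArithmeticProgression

theorem isLeast_image_Ico_neg_mul {c : ℝ} (hc : 0 ≤ c) {s : ℕ} (hs : 2 ≤ s) :
    IsLeast ((fun l : ℕ => -((s : ℝ) * l * c)) '' Set.Ico 1 s) (-((s : ℝ) * (s - 1) * c)) := by
  have hanti : Antitone fun l : ℕ => -((s : ℝ) * l * c) := fun _ _ h => neg_le_neg (by gcongr)
  have hmax : IsGreatest (Set.Ico 1 s) (s - 1) :=
    ⟨⟨by omega, by omega⟩, fun l hl => by simp only [Set.mem_Ico] at hl; omega⟩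
  simpa [Nat.cast_sub (by omega : 1 ≤ s)] using hanti.map_isGreatest hmax

theorem isLeast_image_Ioc_mul {c : ℝ} (hc : 0 ≤ c) {s N : ℕ} (hsN : s < N) :
    IsLeast ((fun l : ℕ => (s : ℝ) * l * c) '' Set.Ioc s N) ((s : ℝ) * (s + 1) * c) := by
  have hmono : Monotone fun l : ℕ => (s : ℝ) * l * c := fun _ _ h =>
    mul_le_mul_of_nonneg_right (by gcongr) hc
  have hmin : IsLeast (Set.Ioc s N) (s + 1) :=
    ⟨⟨by omega, by omega⟩, fun l hl => by simp only [Set.mem_Ioc] at hl; omega⟩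
  simpa using hmono.map_isLeast hmin

theorem stmt13_general (N : ℕ) (κ σ ρ δ φ rbar Δr : ℝ) (hφ : 0 < φ)
    (r : ℕ → ℝ)
    (hrAP : ∀ i : ℕ, 1 ≤ i → i ≤ N → r i = rbar - Δr * ((i : ℝ) - 1))
    (hΔr0 : 0 < Δr) :
    ∀ sstar : ℕ, 2 ≤ sstar → sstar ≤ N - 1 →
      Bminus κ σ ρ δ φ r sstar =
        ρ - δ - 1 + (sstar : ℝ) * ((sstar : ℝ) - 1) * (Δr / 2 + φ) / (κ * σ ^ 2) ∧
      Bplus N κ σ ρ δ φ r sstar =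
        ρ - δ - 1 + (sstar : ℝ) * ((sstar : ℝ) + 1) * (Δr / 2 + φ) / (κ * σ ^ 2) := by
  intro s hs hsN
  have hc : 0 ≤ Δr / 2 + φ := by positivity
  constructor
  · rw [Bminus, Bminus_set_eq_image φ hrAP (by omega), (isLeast_image_Ico_neg_mul hc hs).csInf_eq]
    ring
  · rw [Bplus, Bplus_set_eq_image φ hrAP (by omega), (isLeast_image_Ioc_mul hc (by omega)).csInf_eq]
    ring

/-- Example 2: if the sorted returns form an arithmetic
progression `r̄_[i] = r̄ − Δr (i − 1)` with `0 < Δr < r̄/(N−1)`, then for every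
`2 ≤ s* ≤ N−1`:
`B₋(s*) = ρ − δ − 1 + s*(s*−1)(Δr/2 + φ)/(κσ²)` and
`B₊(s*) = ρ − δ − 1 + s*(s*+1)(Δr/2 + φ)/(κσ²)`. -/
theorem stmt13 (N : ℕ) (hN : 3 ≤ N) (κ σ ρ δ φ rbar Δr : ℝ)
    (hκ : 0 < κ) (hσ : 0 < σ) (hρ1 : -1 < ρ) (hρ2 : ρ < 1) (hδ : 0 ≤ δ) (hφ : 0 < φ)
    (r : ℕ → ℝ)
    (hrAP : ∀ i : ℕ, 1 ≤ i → i ≤ N → r i = rbar - Δr * ((i : ℝ) - 1))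
    (hΔr0 : 0 < Δr) (hΔr1 : Δr < rbar / ((N : ℝ) - 1)) :
    ∀ sstar : ℕ, 2 ≤ sstar → sstar ≤ N - 1 →
      Bminus κ σ ρ δ φ r sstar =
        ρ - δ - 1 + (sstar : ℝ) * ((sstar : ℝ) - 1) * (Δr / 2 + φ) / (κ * σ ^ 2) ∧
      Bplus N κ σ ρ δ φ r sstar =
        ρ - δ - 1 + (sstar : ℝ) * ((sstar : ℝ) + 1) * (Δr / 2 + φ) / (κ * σ ^ 2) :=
  stmt13_general N κ σ ρ δ φ rbar Δr hφ r hrAP hΔr0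
end

section
/- Let h₁ : ℝⁿ → ℝ and q : ℝⁿ → ℝ be functions, let f = h₁ − q, let σ > 0, and let x, x⁺ ∈ ℝⁿ. Define g(z) = h₁(z) − ⟨q̄, z − x⟩ + (σ/2)‖z − x‖₂², where q̄ ∈ ℝⁿ satisfies the subgradient inequality q(z) ≥ q(x) + ⟨q̄, z − x⟩ for all z ∈ ℝⁿ. Suppose δ ∈ ℝⁿ satisfies g(x) ≥ g(x⁺) + ⟨δ, x − x⁺⟩ and ‖δ‖₂ ≤ (σ/4)‖x⁺ − x‖₂. Then f(x⁺) ≤ f(x) − (σ/4)‖x⁺ − x‖₂². -/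
open Matrix

/-- sufficient decrease for one step of the proximal dc
algorithm. If `q̄` is a subgradient of `q` at `x`,
`g(z) = h₁(z) − ⟨q̄, z − x⟩ + (σ/2)‖z − x‖₂²`, and `δ` satisfies
`g(x) ≥ g(x⁺) + ⟨δ, x − x⁺⟩` with `‖δ‖₂ ≤ (σ/4)‖x⁺ − x‖₂`, then
`f(x⁺) ≤ f(x) − (σ/4)‖x⁺ − x‖₂²` for `f = h₁ − q`. -/
theorem stmt17 (n : ℕ) (hn : 1 ≤ n)
    (h₁ q : (Fin n → ℝ) → ℝ) (σ : ℝ) (hσ : 0 < σ)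
    (x xplus qbar δ : Fin n → ℝ)
    (g : (Fin n → ℝ) → ℝ)
    (hg : ∀ z, g z = h₁ z - qbar ⬝ᵥ (z - x) + (σ / 2) * ((z - x) ⬝ᵥ (z - x)))
    (hsubgrad : ∀ z : Fin n → ℝ, q z ≥ q x + qbar ⬝ᵥ (z - x))
    (hδ1 : g x ≥ g xplus + δ ⬝ᵥ (x - xplus))
    (hδ2 : Real.sqrt (δ ⬝ᵥ δ) ≤ (σ / 4) * Real.sqrt ((xplus - x) ⬝ᵥ (xplus - x))) :
    h₁ xplus - q xplus ≤ h₁ x - q x - (σ / 4) * ((xplus - x) ⬝ᵥ (xplus - x)) := by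
  set d := xplus - x with hd
  have hdd : 0 ≤ d ⬝ᵥ d := by
    simp only [dotProduct]
    exact Finset.sum_nonneg fun i _ => mul_self_nonneg _
  have hδδ : 0 ≤ δ ⬝ᵥ δ := by
    simp only [dotProduct]
    exact Finset.sum_nonneg fun i _ => mul_self_nonneg _
  -- Cauchy–Schwarz: δ ⬝ᵥ d ≤ sqrt(δ⬝ᵥδ) * sqrt(d⬝ᵥd)
  have hcs : δ ⬝ᵥ d ≤ Real.sqrt (δ ⬝ᵥ δ) * Real.sqrt (d ⬝ᵥ d) := by
    have h2 : (δ ⬝ᵥ d) ^ 2 ≤ (δ ⬝ᵥ δ) * (d ⬝ᵥ d) := by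
      have := Finset.sum_mul_sq_le_sq_mul_sq (Finset.univ : Finset (Fin n)) δ d
      simpa [dotProduct, pow_two] using this
    calc δ ⬝ᵥ d ≤ |δ ⬝ᵥ d| := le_abs_self _
      _ = Real.sqrt ((δ ⬝ᵥ d) ^ 2) := (Real.sqrt_sq_eq_abs _).symm
      _ ≤ Real.sqrt ((δ ⬝ᵥ δ) * (d ⬝ᵥ d)) := Real.sqrt_le_sqrt h2
      _ = Real.sqrt (δ ⬝ᵥ δ) * Real.sqrt (d ⬝ᵥ d) := Real.sqrt_mul hδδ _
  have hsq : Real.sqrt (d ⬝ᵥ d) * Real.sqrt (d ⬝ᵥ d) = d ⬝ᵥ d :=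
    Real.mul_self_sqrt hdd
  have hsqnn : 0 ≤ Real.sqrt (d ⬝ᵥ d) := Real.sqrt_nonneg _
  have hcs2 : δ ⬝ᵥ d ≤ (σ / 4) * (d ⬝ᵥ d) := by
    calc δ ⬝ᵥ d ≤ Real.sqrt (δ ⬝ᵥ δ) * Real.sqrt (d ⬝ᵥ d) := hcs
      _ ≤ ((σ / 4) * Real.sqrt (d ⬝ᵥ d)) * Real.sqrt (d ⬝ᵥ d) :=
        mul_le_mul_of_nonneg_right hδ2 hsqnn
      _ = (σ / 4) * (d ⬝ᵥ d) := by rw [mul_assoc, hsq]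
  have hgx : g x = h₁ x := by
    rw [hg]; simp
  have hgxp : g xplus = h₁ xplus - qbar ⬝ᵥ d + (σ / 2) * (d ⬝ᵥ d) := hg xplus
  have hxm : x - xplus = -d := by rw [hd]; abel
  have hneg : δ ⬝ᵥ (x - xplus) = -(δ ⬝ᵥ d) := by
    rw [hxm, dotProduct_neg]
  have hq : q xplus ≥ q x + qbar ⬝ᵥ d := hsubgrad xplus
  rw [hgx, hgxp, hneg] at hδ1
  nlinarith [hdd, hcs2, hq, hδ1, hσ.le]
end

section
/- Let W ∈ ℝ^{n×n} be invertible, λ ≥ 0, r̃ ∈ ℝⁿ, and define h(x) = (1/2)‖Wx‖₂² + λ‖Wx‖₂ − r̃ᵀx, whose gradient at any x with Wx ≠ 0 is ∇h(x) = WᵀWx + λ WᵀWx/‖Wx‖₂ − r̃. Let φ̃ ∈ ℝⁿ have strictly positive entries with φ_min = min_i φ̃_i, let x̄ ∈ ℝⁿ satisfy eᵀx̄ = 1 (e the all-ones vector), let L ≥ ‖∇h(x̄)‖_∞, and let 0 < t < min{1/n, φ_min/(2L)}. Suppose x̄ is a lifted stationary point, i.e., there exist d ∈ {1,2,3}ⁿ,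 s ∈ ℝ, and ξ ∈ ℝⁿ such that for every i: (d_i = 1 implies |x̄_i| ≤ t), (d_i = 2 implies x̄_i ≥ t), (d_i = 3 implies x̄_i ≤ −t); ξ_i ∈ [−φ̃_i/t, φ̃_i/t], with ξ_i = φ̃_i/t if x̄_i > 0 and ξ_i = −φ̃_i/t if x̄_i < 0; and φ̃_i·c(d_i) = [∇h(x̄)]_i + ξ_i + s, where c(1) = 0, c(2) = 1/t, c(3) = −1/t. Then for every index i with −t < x̄_i < t one has x̄_i = 0. -/
open Matrix

/-- Theorem 1(i): at a lifted stationary point `x̄` of the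
capped-ℓ1 approximation with `0 < t < min{1/n, φ_min/(2L)}`, every component of
`x̄` lying strictly in `(−t, t)` must be zero. Here
`∇h(x̄) = WᵀWx̄ + λWᵀWx̄/‖Wx̄‖₂ − r̃`, `L ≥ ‖∇h(x̄)‖_∞`, and lifted
stationarity is witnessed by `d ∈ {1,2,3}ⁿ`, a multiplier `s` for the
constraint `eᵀx = 1`, and a subgradient `ξ` of the weighted ℓ1 term. -/
theorem stmt18 (n : ℕ) (hn : 1 ≤ n)
    (W : Matrix (Fin n) (Fin n) ℝ) (hW : IsUnit W)
    (lam : ℝ) (hlam : 0 ≤ lam) (rtil : Fin n → ℝ)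
    (phi : Fin n → ℝ) (hphi : ∀ i, 0 < phi i)
    (phimin : ℝ) (hphimin1 : ∀ i, phimin ≤ phi i) (hphimin2 : ∃ i, phi i = phimin)
    (xbar : Fin n → ℝ) (hxbar : (fun _ => (1 : ℝ)) ⬝ᵥ xbar = 1)
    (gradh : Fin n → ℝ)
    (hgradh : gradh = Wᵀ *ᵥ (W *ᵥ xbar)
        + (lam / Real.sqrt ((W *ᵥ xbar) ⬝ᵥ (W *ᵥ xbar))) • (Wᵀ *ᵥ (W *ᵥ xbar))
        - rtil)
    (L : ℝ) (hL : ∀ i, |gradh i| ≤ L)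
    (t : ℝ) (ht0 : 0 < t) (ht1 : t < 1 / n) (ht2 : t < phimin / (2 * L))
    (d : Fin n → ℕ) (s : ℝ) (ξ : Fin n → ℝ)
    (hd : ∀ i, d i = 1 ∨ d i = 2 ∨ d i = 3)
    (hd1 : ∀ i, d i = 1 → |xbar i| ≤ t)
    (hd2 : ∀ i, d i = 2 → t ≤ xbar i)
    (hd3 : ∀ i, d i = 3 → xbar i ≤ -t)
    (hξ : ∀ i, -(phi i / t) ≤ ξ i ∧ ξ i ≤ phi i / t)
    (hξpos : ∀ i, 0 < xbar i → ξ i = phi i / t)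
    (hξneg : ∀ i, xbar i < 0 → ξ i = -(phi i / t))
    (hstat : ∀ i, phi i * (if d i = 1 then 0 else if d i = 2 then 1 / t else -(1 / t))
        = gradh i + ξ i + s) :
    ∀ i, -t < xbar i → xbar i < t → xbar i = 0 := by
  intro i hlo hhi
  by_contra hne
  have hL0 : 0 ≤ L := le_trans (abs_nonneg _) (hL ⟨0, hn⟩)
  have hLpos : 0 < L := by
    rcases hL0.lt_or_eq with h | h
    · exact h
    · exfalso
      rw [← h, mul_zero, div_zero] at ht2
      linarith
  have hsum : ∑ j, xbar j = 1 := by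
    simpa [dotProduct] using hxbar
  have hnpos : (0:ℝ) < (n:ℝ) := by
    exact_mod_cast Nat.lt_of_lt_of_le Nat.zero_lt_one hn
  have hj : ∃ j, t < xbar j := by
    by_contra h
    push_neg at h
    have h1 : (1:ℝ) ≤ n * t := by
      calc (1:ℝ) = ∑ j, xbar j := hsum.symm
        _ ≤ ∑ _j : Fin n, t := Finset.sum_le_sum (fun j _ => h j)
        _ = n * t := by simp [Finset.sum_const, nsmul_eq_mul]
    have h2 : (n:ℝ) * t < n * (1/n) := by
      exact mul_lt_mul_of_pos_left ht1 hnpos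
    rw [mul_one_div, div_self (ne_of_gt hnpos)] at h2
    linarith
  obtain ⟨j, hjt⟩ := hj
  have hdj : d j = 2 := by
    rcases hd j with h | h | h
    · have h2 := abs_le.mp (hd1 j h)
      linarith [h2.2]
    · exact h
    · have := hd3 j h
      linarith
  have hxj : 0 < xbar j := lt_trans ht0 hjt
  have hsj := hstat j
  rw [hdj, hξpos j hxj] at hsj
  norm_num at hsj
  have hs : s = -gradh j := by
    have : phi j * t⁻¹ = phi j / t := by ring
    rw [this] at hsj
    linarith
  have hdi : d i = 1 := by
    rcases hd i with h | h | h
    · exact h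
    · have := hd2 i h
      linarith
    · have := hd3 i h
      linarith
  have hsi := hstat i
  rw [hdi] at hsi
  norm_num at hsi
  have hphit : 2 * L < phi i / t := by
    have h2L : 0 < 2 * L := by linarith
    have h1 : 2 * L * t < phimin := by
      calc 2*L*t < 2*L*(phimin/(2*L)) := mul_lt_mul_of_pos_left ht2 h2L
        _ = phimin := by field_simp
    have h2 : 2*L < phimin / t := (lt_div_iff₀ ht0).mpr h1
    have h3 : phimin / t ≤ phi i / t := by
      gcongr
      exact hphimin1 i
    linarith
  have hgi := abs_le.mp (hL i)
  have hgj := abs_le.mp (hL j)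
  rcases lt_trichotomy (xbar i) 0 with h | h | h
  · rw [hξneg i h, hs] at hsi
    linarith [hgi.1, hgi.2, hgj.1, hgj.2]
  · exact hne h
  · rw [hξpos i h, hs] at hsi
    linarith [hgi.1, hgi.2, hgj.1, hgj.2]
end

section
/- Let κ > 0 and r̄ ∈ ℝⁿ, and for each ε > 0 let x_RMV(ε) be the unique minimizer over C of the function x ↦ κ xᵀΣx + √ε·√(xᵀΣx) − r̄ᵀx. Then x_RMV(ε) → x_MV as ε → 0⁺ and x_RMV(ε) → x_MIN as ε → +∞ (convergence in the Euclidean norm on ℝⁿ). -/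
/-! On the hyperplane `eᵀx = 1` the mean-variance objective `f x = κ xᵀAx - r̄ᵀx` is a quadratic
whose Lagrange critical point is `x_MV`, so there `f x = f x_MV + κ (x - x_MV)ᵀA(x - x_MV)`;
likewise `xᵀAx = x_MINᵀAx_MIN + (x - x_MIN)ᵀA(x - x_MIN)`. Comparing the robust objective at its
minimizer `x_ε` with its value at `x_MV` gives `κ (x_ε - x_MV)ᵀA(x_ε - x_MV) ≤ √ε √(x_MVᵀAx_MV)`.
Comparing it with its value at `x_MIN`, and using `f x_ε ≥ f x_MV`, gives
`0 ≤ √(x_εᵀAx_ε) - √(x_MINᵀAx_MIN) ≤ (f x_MIN - f x_MV) / √ε`. Finally, positive definiteness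
turns smallness of `(x - y)ᵀA(x - y)` into smallness of `‖x - y‖`. -/

open Matrix Filter Topology

section
variable {ι : Type*} [Fintype ι]

noncomputable def meanVariance (A : Matrix ι ι ℝ) (κ : ℝ) (r x : ι → ℝ) : ℝ :=
  κ * (x ⬝ᵥ A *ᵥ x) - r ⬝ᵥ x

noncomputable def robustMeanVariance (A : Matrix ι ι ℝ) (κ : ℝ) (r : ι → ℝ) (ε : ℝ)
    (x : ι → ℝ) : ℝ :=
  meanVariance A κ r x + √ε * √(x ⬝ᵥ A *ᵥ x)

/-- `(2κ)Ay - r` is the gradient of `meanVariance A κ r` at `y`: it must be normal to the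
hyperplane `eᵀx = 1`. -/
def IsLagrangeCritical (A : Matrix ι ι ℝ) (κ : ℝ) (r e y : ι → ℝ) : Prop :=
  e ⬝ᵥ y = 1 ∧ ∃ c : ℝ, (2 * κ) • (A *ᵥ y) - r = c • e

variable {A : Matrix ι ι ℝ} {κ : ℝ} {r e y : ι → ℝ}

theorem meanVariance_eq_add_of_isLagrangeCritical (hAs : Aᵀ = A)
    (hy : IsLagrangeCritical A κ r e y) {x : ι → ℝ} (hx : e ⬝ᵥ x = 1) :
    meanVariance A κ r x = meanVariance A κ r y + κ * ((x - y) ⬝ᵥ A *ᵥ (x - y)) := by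
  obtain ⟨hey, c, hc⟩ := hy
  obtain ⟨d, rfl⟩ : ∃ d, x = y + d := ⟨x - y, by abel⟩
  have hed : e ⬝ᵥ d = 0 := by rwa [dotProduct_add, hey, add_eq_left] at hx
  have hsym : y ⬝ᵥ A *ᵥ d = d ⬝ᵥ A *ᵥ y := by
    rw [dotProduct_mulVec, ← mulVec_transpose, hAs, dotProduct_comm]
  have hcrit : (2 * κ) * (d ⬝ᵥ A *ᵥ y) = r ⬝ᵥ d := by
    have := congrArg (· ⬝ᵥ d) hc
    simp only [sub_dotProduct, smul_dotProduct, hed, smul_eq_mul, mul_zero, sub_eq_zero] at this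
    rwa [dotProduct_comm (A *ᵥ y)] at this
  simp only [meanVariance, add_sub_cancel_left, mulVec_add, dotProduct_add, add_dotProduct, hsym]
  linear_combination hcrit

theorem isLagrangeCritical_minVariance [DecidableEq ι] (hA : IsUnit A.det) {β : ℝ}
    (hβ : β = e ⬝ᵥ A⁻¹ *ᵥ e) (hβ0 : β ≠ 0) :
    IsLagrangeCritical A 1 0 e (β⁻¹ • (A⁻¹ *ᵥ e)) := by
  refine ⟨by rw [dotProduct_smul, ← hβ, smul_eq_mul, inv_mul_cancel₀ hβ0], 2 * β⁻¹, ?_⟩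
  rw [mulVec_smul, mulVec_mulVec, mul_nonsing_inv _ hA, one_mulVec, sub_zero, smul_smul,
    mul_one]

theorem isLagrangeCritical_meanVariance [DecidableEq ι] (hA : IsUnit A.det) {β : ℝ}
    (hβ : β = e ⬝ᵥ A⁻¹ *ᵥ e) (hβ0 : β ≠ 0) (hκ : κ ≠ 0) :
    IsLagrangeCritical A κ r e ((1 / (2 * κ)) •
      ((A⁻¹ - β⁻¹ • vecMulVec (A⁻¹ *ᵥ e) (e ᵥ* A⁻¹)) *ᵥ r) + β⁻¹ • (A⁻¹ *ᵥ e)) := by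
  have hproj : vecMulVec (A⁻¹ *ᵥ e) (e ᵥ* A⁻¹) *ᵥ r = ((e ᵥ* A⁻¹) ⬝ᵥ r) • (A⁻¹ *ᵥ e) := by
    rw [vecMulVec_mulVec, op_smul_eq_smul]
  have hAinv (v : ι → ℝ) : A *ᵥ (A⁻¹ *ᵥ v) = v := by
    rw [mulVec_mulVec, mul_nonsing_inv _ hA, one_mulVec]
  have hPe : e ⬝ᵥ ((A⁻¹ - β⁻¹ • vecMulVec (A⁻¹ *ᵥ e) (e ᵥ* A⁻¹)) *ᵥ r) = 0 := by
    rw [sub_mulVec, smul_mulVec, hproj, dotProduct_sub, dotProduct_smul, dotProduct_smul,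
      dotProduct_mulVec, ← hβ, smul_eq_mul, smul_eq_mul]
    field_simp
    ring
  have hAP : A *ᵥ ((A⁻¹ - β⁻¹ • vecMulVec (A⁻¹ *ᵥ e) (e ᵥ* A⁻¹)) *ᵥ r) =
      r - (β⁻¹ * ((e ᵥ* A⁻¹) ⬝ᵥ r)) • e := by
    rw [sub_mulVec, smul_mulVec, hproj, mulVec_sub, mulVec_smul, mulVec_smul, hAinv, hAinv,
      smul_smul]
  refine ⟨?_, 2 * κ * β⁻¹ - β⁻¹ * ((e ᵥ* A⁻¹) ⬝ᵥ r), ?_⟩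
  · rw [dotProduct_add, dotProduct_smul, hPe, smul_zero, zero_add,
      (isLagrangeCritical_minVariance hA hβ hβ0).1]
  · rw [mulVec_add, mulVec_smul, mulVec_smul, hAP, hAinv]
    ext i
    simp only [Pi.sub_apply, Pi.add_apply, Pi.smul_apply, smul_eq_mul]
    field_simp
    ring

theorem Matrix.PosDef.exists_pos_mul_sq_norm_le (hA : A.PosDef) :
    ∃ m > 0, ∀ x : ι → ℝ, m * ‖x‖ ^ 2 ≤ x ⬝ᵥ A *ᵥ x := by
  rcases isEmpty_or_nonempty ι with _ | _
  · exact ⟨1, one_pos, fun x => by simp [Subsingleton.elim x 0]⟩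
  have hq : Continuous fun x : ι → ℝ => x ⬝ᵥ A *ᵥ x := by
    simp only [dotProduct, mulVec]
    fun_prop
  obtain ⟨z, hz, hmin⟩ := (isCompact_sphere (0 : ι → ℝ) 1).exists_isMinOn
    (NormedSpace.sphere_nonempty.mpr zero_le_one) hq.continuousOn
  have hz0 : z ≠ 0 := ne_zero_of_mem_unit_sphere ⟨z, hz⟩
  refine ⟨z ⬝ᵥ A *ᵥ z, by simpa using hA.dotProduct_mulVec_pos hz0, fun x => ?_⟩
  rcases eq_or_ne x 0 with rfl | hx
  · simp
  have hnx : 0 < ‖x‖ := norm_pos_iff.mpr hx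
  have hscale : (‖x‖⁻¹ • x) ⬝ᵥ A *ᵥ (‖x‖⁻¹ • x) = (‖x‖ ^ 2)⁻¹ * (x ⬝ᵥ A *ᵥ x) := by
    simp only [mulVec_smul, smul_dotProduct, dotProduct_smul, smul_eq_mul]; ring
  have hxS : ‖x‖⁻¹ • x ∈ Metric.sphere (0 : ι → ℝ) 1 := by
    simp [norm_smul, hnx.ne']
  have := isMinOn_iff.1 hmin _ hxS
  rwa [hscale, le_inv_mul_iff₀ (by positivity), mul_comm] at this

theorem Matrix.PosDef.tendsto_of_tendsto_dotProduct_mulVec_sub (hA : A.PosDef) {α : Type*}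
    {l : Filter α} {x : α → ι → ℝ}
    (h : Tendsto (fun a => (x a - y) ⬝ᵥ A *ᵥ (x a - y)) l (𝓝 0)) :
    Tendsto x l (𝓝 y) := by
  obtain ⟨m, hm, hcoer⟩ := hA.exists_pos_mul_sq_norm_le
  rw [tendsto_iff_norm_sub_tendsto_zero]
  have hbound := (h.div_const m).sqrt
  rw [zero_div, Real.sqrt_zero] at hbound
  refine squeeze_zero (fun _ => norm_nonneg _) (fun a => ?_) hbound
  rw [← Real.sqrt_sq (norm_nonneg (x a - y))]
  exact Real.sqrt_le_sqrt <| (le_div_iff₀ hm).2 <| mul_comm m _ ▸ hcoer _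

theorem tendsto_nhdsGT_zero_of_robustMeanVariance_le (hA : A.PosDef) (hκ : 0 < κ)
    (hy : IsLagrangeCritical A κ r e y) {x : ℝ → ι → ℝ}
    (hx : ∀ ε > 0, e ⬝ᵥ x ε = 1 ∧
      robustMeanVariance A κ r ε (x ε) ≤ robustMeanVariance A κ r ε y) :
    Tendsto x (𝓝[>] 0) (𝓝 y) := by
  have hAs : Aᵀ = A := by simpa using hA.isHermitian.eq
  refine hA.tendsto_of_tendsto_dotProduct_mulVec_sub <| squeeze_zero'
    (Eventually.of_forall fun ε => by simpa using hA.posSemidef.dotProduct_mulVec_nonneg (x ε - y))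
    (g := fun ε => √ε * √(y ⬝ᵥ A *ᵥ y) / κ) ?_ ?_
  · filter_upwards [self_mem_nhdsWithin] with ε (hε : 0 < ε)
    obtain ⟨hex, hle⟩ := hx ε hε
    have := meanVariance_eq_add_of_isLagrangeCritical hAs hy hex
    unfold robustMeanVariance at hle
    rw [le_div_iff₀ hκ]
    nlinarith [Real.sqrt_nonneg ε, Real.sqrt_nonneg (x ε ⬝ᵥ A *ᵥ x ε)]
  · have := ((Real.continuous_sqrt.tendsto 0).mono_left
      (nhdsWithin_le_nhds (s := Set.Ioi 0))).mul_const (√(y ⬝ᵥ A *ᵥ y)) |>.div_const κ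
    simpa using this

theorem tendsto_atTop_of_robustMeanVariance_le (hA : A.PosDef) (hκ : 0 ≤ κ)
    (hy : IsLagrangeCritical A κ r e y) {z : ι → ℝ} (hz : IsLagrangeCritical A 1 0 e z)
    {x : ℝ → ι → ℝ}
    (hx : ∀ ε > 0, e ⬝ᵥ x ε = 1 ∧
      robustMeanVariance A κ r ε (x ε) ≤ robustMeanVariance A κ r ε z) :
    Tendsto x atTop (𝓝 z) := by
  have hAs : Aᵀ = A := by simpa using hA.isHermitian.eq
  have hq (v : ι → ℝ) : 0 ≤ v ⬝ᵥ A *ᵥ v := by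
    simpa using hA.posSemidef.dotProduct_mulVec_nonneg v
  set D := meanVariance A κ r z - meanVariance A κ r y
  set u : ℝ → ℝ := fun ε => √(x ε ⬝ᵥ A *ᵥ x ε) - √(z ⬝ᵥ A *ᵥ z)
  have hdiff : ∀ ε > 0, (x ε - z) ⬝ᵥ A *ᵥ (x ε - z) = x ε ⬝ᵥ A *ᵥ x ε - z ⬝ᵥ A *ᵥ z := by
    intro ε hε
    have := meanVariance_eq_add_of_isLagrangeCritical hAs hz (hx ε hε).1
    simp only [meanVariance, one_mul, zero_dotProduct, sub_zero] at this
    linarith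
  have hqu : ∀ ε > 0, (x ε - z) ⬝ᵥ A *ᵥ (x ε - z) = u ε * (u ε + 2 * √(z ⬝ᵥ A *ᵥ z)) := by
    intro ε hε
    rw [hdiff ε hε]
    nlinarith [Real.sq_sqrt (hq (x ε)), Real.sq_sqrt (hq z)]
  have hu : ∀ ε > 0, 0 ≤ u ε ∧ u ε ≤ D / √ε := by
    intro ε hε
    obtain ⟨hex, hle⟩ := hx ε hε
    have hqz : z ⬝ᵥ A *ᵥ z ≤ x ε ⬝ᵥ A *ᵥ x ε := by linarith [hdiff ε hε, hq (x ε - z)]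
    have hmv := meanVariance_eq_add_of_isLagrangeCritical hAs hy hex
    have hmv' : meanVariance A κ r y ≤ meanVariance A κ r (x ε) := by
      nlinarith [hq (x ε - y)]
    unfold robustMeanVariance at hle
    refine ⟨sub_nonneg.2 (Real.sqrt_le_sqrt hqz), (le_div_iff₀ (Real.sqrt_pos.2 hε)).2 ?_⟩
    linarith
  have hu0 : Tendsto u atTop (𝓝 0) :=
    tendsto_of_tendsto_of_tendsto_of_le_of_le' tendsto_const_nhds
      (tendsto_const_nhds.div_atTop Real.tendsto_sqrt_atTop)
      (eventually_gt_atTop 0 |>.mono fun ε hε => (hu ε hε).1)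
      (eventually_gt_atTop 0 |>.mono fun ε hε => (hu ε hε).2)
  refine hA.tendsto_of_tendsto_dotProduct_mulVec_sub ?_
  have := hu0.mul (hu0.add_const (2 * √(z ⬝ᵥ A *ᵥ z)))
  rw [zero_mul] at this
  exact this.congr' (eventually_gt_atTop 0 |>.mono fun ε hε => (hqu ε hε).symm)

end

theorem stmt19_general (n : ℕ) (A : Matrix (Fin n) (Fin n) ℝ)
    (hA : A.PosDef)
    (e : Fin n → ℝ)
    (β : ℝ) (hβ : β = e ⬝ᵥ A⁻¹ *ᵥ e)
    (xMIN : Fin n → ℝ) (hxMIN : xMIN = β⁻¹ • (A⁻¹ *ᵥ e))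
    (κ : ℝ) (hκ : 0 < κ) (rbar : Fin n → ℝ)
    (xMV : Fin n → ℝ)
    (hxMV : xMV = (1 / (2 * κ)) •
        ((A⁻¹ - β⁻¹ • vecMulVec (A⁻¹ *ᵥ e) (e ᵥ* A⁻¹)) *ᵥ rbar) + xMIN)
    (xRMV : ℝ → (Fin n → ℝ))
    (hxRMV : ∀ ε : ℝ, 0 < ε →
      e ⬝ᵥ xRMV ε = 1 ∧
      ∀ y : Fin n → ℝ, e ⬝ᵥ y = 1 → y ≠ xRMV ε →
        κ * (xRMV ε ⬝ᵥ A *ᵥ xRMV ε)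
            + Real.sqrt ε * Real.sqrt (xRMV ε ⬝ᵥ A *ᵥ xRMV ε) - rbar ⬝ᵥ xRMV ε <
          κ * (y ⬝ᵥ A *ᵥ y) + Real.sqrt ε * Real.sqrt (y ⬝ᵥ A *ᵥ y) - rbar ⬝ᵥ y) :
    Tendsto xRMV (nhdsWithin 0 (Set.Ioi 0)) (nhds xMV) ∧
    Tendsto xRMV atTop (nhds xMIN) := by
  have hmin : ∀ ε > 0, ∀ y, e ⬝ᵥ y = 1 →
      robustMeanVariance A κ rbar ε (xRMV ε) ≤ robustMeanVariance A κ rbar ε y := by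
    intro ε hε y hy
    rcases eq_or_ne y (xRMV ε) with rfl | hne
    · exact le_rfl
    · have := (hxRMV ε hε).2 y hy hne
      simp only [robustMeanVariance, meanVariance]
      linarith
  have he0 : e ≠ 0 := by
    rintro rfl
    simpa using (hxRMV 1 one_pos).1
  have hβ0 : β ≠ 0 := by
    rw [hβ]
    simpa using (hA.inv.dotProduct_mulVec_pos he0).ne'
  have hdet : IsUnit A.det := isUnit_iff_ne_zero.2 hA.det_pos.ne'
  have hMIN := isLagrangeCritical_minVariance hdet hβ hβ0
  have hMV := isLagrangeCritical_meanVariance hdet hβ hβ0 hκ.ne' (r := rbar)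
  rw [← hxMIN] at hMIN hMV
  rw [← hxMV] at hMV
  exact ⟨tendsto_nhdsGT_zero_of_robustMeanVariance_le hA hκ hMV
      fun ε hε => ⟨(hxRMV ε hε).1, hmin ε hε _ hMV.1⟩,
    tendsto_atTop_of_robustMeanVariance_le hA hκ.le hMV hMIN
      fun ε hε => ⟨(hxRMV ε hε).1, hmin ε hε _ hMIN.1⟩⟩

/-- letting `x_RMV(ε)` be the unique minimizer over `C` of
`x ↦ κ xᵀΣx + √ε √(xᵀΣx) − r̄ᵀx`, one has `x_RMV(ε) → x_MV` as `ε → 0⁺` and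
`x_RMV(ε) → x_MIN` as `ε → +∞`. -/
theorem stmt19 (n : ℕ) (hn : 1 ≤ n) (A : Matrix (Fin n) (Fin n) ℝ)
    (hA : A.PosDef) (hAs : A.IsSymm)
    (e : Fin n → ℝ) (he : e = fun _ => 1)
    (β : ℝ) (hβ : β = e ⬝ᵥ A⁻¹ *ᵥ e)
    (xMIN : Fin n → ℝ) (hxMIN : xMIN = β⁻¹ • (A⁻¹ *ᵥ e))
    (κ : ℝ) (hκ : 0 < κ) (rbar : Fin n → ℝ)
    (xMV : Fin n → ℝ)
    (hxMV : xMV = (1 / (2 * κ)) •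
        ((A⁻¹ - β⁻¹ • vecMulVec (A⁻¹ *ᵥ e) (e ᵥ* A⁻¹)) *ᵥ rbar) + xMIN)
    (xRMV : ℝ → (Fin n → ℝ))
    (hxRMV : ∀ ε : ℝ, 0 < ε →
      e ⬝ᵥ xRMV ε = 1 ∧
      ∀ y : Fin n → ℝ, e ⬝ᵥ y = 1 → y ≠ xRMV ε →
        κ * (xRMV ε ⬝ᵥ A *ᵥ xRMV ε)
            + Real.sqrt ε * Real.sqrt (xRMV ε ⬝ᵥ A *ᵥ xRMV ε) - rbar ⬝ᵥ xRMV ε <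
          κ * (y ⬝ᵥ A *ᵥ y) + Real.sqrt ε * Real.sqrt (y ⬝ᵥ A *ᵥ y) - rbar ⬝ᵥ y) :
    Tendsto xRMV (nhdsWithin 0 (Set.Ioi 0)) (nhds xMV) ∧
    Tendsto xRMV atTop (nhds xMIN) :=
  stmt19_general n A hA e β hβ xMIN hxMIN κ hκ rbar xMV hxMV xRMV hxRMV
end
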